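/- arXiv:2212.01300 — 9 statements merged into one kernel-verified Lean document; each statement's English description precedes it below -/
import Mathlib

section
/- Fix an integer t ≥ 2 and a perfect field k of characteristic p > 0. Suppose that for every integer n ≥ t+1 the ring R_t^{(n−1)×n} is purely F-regular along p_t^{(n−1)×n}. Then for all integers m, n ≥ t the ring R_t^{m×n} is purely F-regular along p_t^{m×n}. -/
open MvPolynomial Matrix

/-- The ideal generated by the `t × t` minors of a matrix `M`. -/
def minorsIdeal {A : Type*} [CommRing A] {a b : ℕ} (M : Matrix (Fin a) (Fin b) A)
    (t : ℕ) : Ideal A :=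
  Ideal.span { d : A | ∃ (r : Fin t → Fin a) (c : Fin t → Fin b),
    Function.Injective r ∧ Function.Injective c ∧ d = (M.submatrix r c).det }

/-- The generic `m × n` matrix of indeterminates over `k`. -/
noncomputable def genMatrix (k : Type*) [CommRing k] (m n : ℕ) :
    Matrix (Fin m) (Fin n) (MvPolynomial (Fin m × Fin n) k) :=
  fun i j => MvPolynomial.X (i, j)

/-- `φ` is a `p^e`-linear map: an additive map with `φ (a^(p^e) * b) = a * φ b`. -/
def IsPLinearMap (p e : ℕ) {R : Type*} [CommRing R] (φ : R →+ R) : Prop :=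
  ∀ a b : R, φ (a ^ p ^ e * b) = a * φ b

/-- `R` is purely `F`-regular along the ideal `q`. -/
def PurelyFRegularAlong (p : ℕ) {R : Type*} [CommRing R] (q : Ideal R) : Prop :=
  ∀ c : R, c ∉ q → ∃ e : ℕ, 1 ≤ e ∧ ∃ φ : R →+ R,
    IsPLinearMap p e φ ∧ (∀ x ∈ q, φ x ∈ q) ∧ φ c = 1

/-- The prime divisor ideal `p_t^{m×n}` in the generic determinantal ring
`R_t^{m×n} = k[x]/I_t(x)`, i.e. the image of the ideal of `(t-1)`-minors of the
first `t-1` rows of the generic matrix. -/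
noncomputable def detPrimeIdeal (k : Type*) [CommRing k] (m n t : ℕ) (hm : t - 1 ≤ m) :
    Ideal (MvPolynomial (Fin m × Fin n) k ⧸ minorsIdeal (genMatrix k m n) t) :=
  (minorsIdeal ((genMatrix k m n).submatrix
      ((Fin.castLE hm) : Fin (t - 1) → Fin m) id) (t - 1)).map
    (Ideal.Quotient.mk (minorsIdeal (genMatrix k m n) t))

section Retract

/-- Pure F-regularity along an ideal descends to retracts. -/
theorem purelyFRegular_of_retract {p : ℕ} {R R' : Type*} [CommRing R] [CommRing R']
    (f : R →+* R') (g : R' →+* R) (hgf : ∀ x, g (f x) = x)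
    {q : Ideal R} {q' : Ideal R'} (hf : ∀ x ∈ q, f x ∈ q') (hg : ∀ y ∈ q', g y ∈ q)
    (h : PurelyFRegularAlong p q') : PurelyFRegularAlong p q := by
  intro c hc
  have hfc : f c ∉ q' := fun h' => hc (hgf c ▸ hg _ h')
  obtain ⟨e, he, φ, hφ, hφq, hφc⟩ := h (f c) hfc
  refine ⟨e, he, (g.toAddMonoidHom.comp φ).comp f.toAddMonoidHom, ?_, ?_, ?_⟩
  · intro a b
    simp only [AddMonoidHom.comp_apply, RingHom.toAddMonoidHom_eq_coe,
      AddMonoidHom.coe_coe]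
    rw [_root_.map_mul f, map_pow f, hφ, _root_.map_mul g, hgf]
  · intro x hx
    exact hg _ (hφq _ (hf _ hx))
  · show g (φ (f c)) = 1
    rw [hφc, _root_.map_one g]

end Retract

section Maps

variable (k : Type*) [CommRing k] {m n M N : ℕ}

noncomputable def inclHom (hM : m ≤ M) (hN : n ≤ N) :
    MvPolynomial (Fin m × Fin n) k →+* MvPolynomial (Fin M × Fin N) k :=
  (rename (Prod.map (Fin.castLE hM) (Fin.castLE hN))).toRingHom

noncomputable def projHom (m n : ℕ) {M N : ℕ} :
    MvPolynomial (Fin M × Fin N) k →+* MvPolynomial (Fin m × Fin n) k :=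
  (aeval fun q : Fin M × Fin N =>
    if h : (q.1 : ℕ) < m ∧ (q.2 : ℕ) < n then
      (X (⟨q.1, h.1⟩, ⟨q.2, h.2⟩) : MvPolynomial (Fin m × Fin n) k) else 0).toRingHom

lemma incl_X (hM : m ≤ M) (hN : n ≤ N) (q : Fin m × Fin n) :
    inclHom k hM hN (X q) = X (Fin.castLE hM q.1, Fin.castLE hN q.2) := by
  simp [inclHom, Prod.map]

lemma proj_X (q : Fin M × Fin N) :
    projHom k m n (X q) =
      if h : (q.1 : ℕ) < m ∧ (q.2 : ℕ) < n then
        (X (⟨q.1, h.1⟩, ⟨q.2, h.2⟩) : MvPolynomial (Fin m × Fin n) k) else 0 := by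
  simp [projHom]

lemma proj_incl (hM : m ≤ M) (hN : n ≤ N) (x : MvPolynomial (Fin m × Fin n) k) :
    projHom k m n (inclHom k hM hN x) = x := by
  have : (projHom k m n (M := M) (N := N)).comp (inclHom k hM hN) = RingHom.id _ := by
    apply MvPolynomial.ringHom_ext
    · intro a; simp [inclHom, projHom]
    · intro q
      rw [RingHom.comp_apply, incl_X, proj_X]
      rw [dif_pos ⟨q.1.isLt, q.2.isLt⟩]
      simp
  exact congrFun (congrArg (fun f => f.toFun) this) x

lemma incl_minors (hM : m ≤ M) (hN : n ≤ N) (t : ℕ) :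
    minorsIdeal (genMatrix k m n) t ≤
      (minorsIdeal (genMatrix k M N) t).comap (inclHom k hM hN) := by
  rw [minorsIdeal, Ideal.span_le]
  rintro d ⟨r, c, hr, hc, rfl⟩
  simp only [SetLike.mem_coe, Ideal.mem_comap]
  have key : inclHom k hM hN ((genMatrix k m n).submatrix r c).det =
      ((genMatrix k M N).submatrix (Fin.castLE hM ∘ r) (Fin.castLE hN ∘ c)).det := by
    rw [RingHom.map_det]
    congr 1
    ext a b
    simp [genMatrix, incl_X]
  rw [key]
  exact Ideal.subset_span ⟨_, _, (Fin.castLE_injective _).comp hr,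
    (Fin.castLE_injective _).comp hc, rfl⟩

lemma proj_minors (t : ℕ) :
    minorsIdeal (genMatrix k M N) t ≤
      (minorsIdeal (genMatrix k m n) t).comap (projHom k m n) := by
  rw [minorsIdeal, Ideal.span_le]
  rintro d ⟨r, c, hr, hc, rfl⟩
  simp only [SetLike.mem_coe, Ideal.mem_comap]
  rw [RingHom.map_det, RingHom.mapMatrix_apply]
  by_cases hra : ∀ a, (r a : ℕ) < m
  · by_cases hcb : ∀ b2, (c b2 : ℕ) < n
    · have key : ((genMatrix k M N).submatrix r c).map (projHom k m n) =
          (genMatrix k m n).submatrix (fun a => (⟨r a, hra a⟩ : Fin m))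
            (fun b2 => (⟨c b2, hcb b2⟩ : Fin n)) := by
        refine Matrix.ext fun a b2 => ?_
        simp only [Matrix.map_apply, Matrix.submatrix_apply, genMatrix]
        rw [proj_X, dif_pos ⟨hra a, hcb b2⟩]
      rw [key]
      exact Ideal.subset_span ⟨_, _,
        fun a a' h => hr (by simpa [Fin.ext_iff] using h),
        fun a a' h => hc (by simpa [Fin.ext_iff] using h), rfl⟩
    · push_neg at hcb
      obtain ⟨b0, hb0⟩ := hcb
      rw [Matrix.det_eq_zero_of_column_eq_zero b0 ?_]
      · exact Ideal.zero_mem _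
      · intro a
        simp only [Matrix.map_apply, Matrix.submatrix_apply, genMatrix]
        rw [proj_X, dif_neg (fun h => absurd (h.2 : (c b0 : ℕ) < n) (by omega))]
  · push_neg at hra
    obtain ⟨a0, ha0⟩ := hra
    rw [Matrix.det_eq_zero_of_row_eq_zero a0 ?_]
    · exact Ideal.zero_mem _
    · intro b2
      simp only [Matrix.map_apply, Matrix.submatrix_apply, genMatrix]
      rw [proj_X, dif_neg (fun h => absurd (h.1 : (r a0 : ℕ) < m) (by omega))]

lemma incl_pminors (hM : m ≤ M) (hN : n ≤ N) (s : ℕ) (hm' : s ≤ m) (hM' : s ≤ M) :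
    minorsIdeal ((genMatrix k m n).submatrix (Fin.castLE hm') id) s ≤
      (minorsIdeal ((genMatrix k M N).submatrix (Fin.castLE hM') id) s).comap
        (inclHom k hM hN) := by
  rw [minorsIdeal, Ideal.span_le]
  rintro d ⟨r, c, hr, hc, rfl⟩
  simp only [SetLike.mem_coe, Ideal.mem_comap]
  have key : inclHom k hM hN
        ((((genMatrix k m n).submatrix (Fin.castLE hm') id)).submatrix r c).det =
      ((((genMatrix k M N).submatrix (Fin.castLE hM') id)).submatrix r
        (Fin.castLE hN ∘ c)).det := by
    rw [RingHom.map_det, RingHom.mapMatrix_apply]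
    congr 1
    refine Matrix.ext fun a b2 => ?_
    simp only [Matrix.map_apply, Matrix.submatrix_apply, genMatrix, id_eq,
      Function.comp_apply]
    rw [incl_X]
    exact congrArg X (Prod.ext (Fin.ext (by simp)) rfl)
  rw [key]
  exact Ideal.subset_span ⟨r, _, hr, (Fin.castLE_injective _).comp hc, rfl⟩

lemma proj_pminors (s : ℕ) (hm' : s ≤ m) (hM' : s ≤ M) :
    minorsIdeal ((genMatrix k M N).submatrix (Fin.castLE hM') id) s ≤
      (minorsIdeal ((genMatrix k m n).submatrix (Fin.castLE hm') id) s).comap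
        (projHom k m n) := by
  rw [minorsIdeal, Ideal.span_le]
  rintro d ⟨r, c, hr, hc, rfl⟩
  simp only [SetLike.mem_coe, Ideal.mem_comap]
  rw [RingHom.map_det, RingHom.mapMatrix_apply]
  by_cases hcb : ∀ b2, (c b2 : ℕ) < n
  · have key : ((((genMatrix k M N).submatrix (Fin.castLE hM') id)).submatrix r c).map
          (projHom k m n) =
        (((genMatrix k m n).submatrix (Fin.castLE hm') id)).submatrix r
          (fun b2 => (⟨c b2, hcb b2⟩ : Fin n)) := by
      refine Matrix.ext fun a b2 => ?_
      simp only [Matrix.map_apply, Matrix.submatrix_apply, genMatrix, id_eq]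
      rw [proj_X, dif_pos ⟨by simpa using (r a).isLt.trans_le hm', hcb b2⟩]
      exact congrArg X (Prod.ext (Fin.ext (by simp)) rfl)
    rw [key]
    exact Ideal.subset_span ⟨r, _, hr,
      fun a a' h => hc (by simpa [Fin.ext_iff] using h), rfl⟩
  · push_neg at hcb
    obtain ⟨b0, hb0⟩ := hcb
    rw [Matrix.det_eq_zero_of_column_eq_zero b0 ?_]
    · exact Ideal.zero_mem _
    · intro a
      simp only [Matrix.map_apply, Matrix.submatrix_apply, genMatrix, id_eq]
      rw [proj_X, dif_neg (fun h => absurd (h.2 : (c b0 : ℕ) < n) (by omega))]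

end Maps

/-- Reduction of pure F-regularity of determinantal pairs to the log Gorenstein case
`m = n - 1`. -/
theorem purelyFRegular_determinantal_of_logGorensteinCase (k : Type*) [Field k] [PerfectField k]
    (p : ℕ) (hp : p.Prime) [CharP k p] (t : ℕ) (ht : 2 ≤ t)
    (hyp : ∀ (n : ℕ) (hn : t + 1 ≤ n),
      PurelyFRegularAlong p (detPrimeIdeal k (n - 1) n t (by omega))) :
    ∀ (m n : ℕ) (hm : t ≤ m) (hn : t ≤ n),
      PurelyFRegularAlong p (detPrimeIdeal k m n t (by omega)) := by
  intro m n hm hn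
  set N := max (m + 1) (max n (t + 1)) with hNdef
  have hN1 : t + 1 ≤ N := le_trans (le_max_right _ _) (le_max_right _ _)
  have hm1 : m + 1 ≤ N := le_max_left _ _
  have hnN : n ≤ N := le_trans (le_max_left _ _) (le_max_right _ _)
  have hmM : m ≤ N - 1 := by omega
  have big := hyp N hN1
  refine purelyFRegular_of_retract
    (Ideal.quotientMap (minorsIdeal (genMatrix k (N - 1) N) t) (inclHom k hmM hnN)
      (incl_minors k hmM hnN t))
    (Ideal.quotientMap (minorsIdeal (genMatrix k m n) t) (projHom k m n)
      (proj_minors k t))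
    ?_ ?_ ?_ big
  · intro x
    obtain ⟨s, rfl⟩ := Ideal.Quotient.mk_surjective x
    rw [Ideal.quotientMap_mk, Ideal.quotientMap_mk, proj_incl]
  · intro x hx
    refine ?_
    have key : detPrimeIdeal k m n t (by omega) ≤
        Ideal.comap (Ideal.quotientMap (minorsIdeal (genMatrix k (N - 1) N) t)
          (inclHom k hmM hnN) (incl_minors k hmM hnN t))
          (detPrimeIdeal k (N - 1) N t (by omega)) := by
      rw [detPrimeIdeal, Ideal.map_le_iff_le_comap]
      intro y hy
      rw [Ideal.mem_comap, Ideal.mem_comap, Ideal.quotientMap_mk]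
      exact Ideal.mem_map_of_mem _
        (incl_pminors k hmM hnN (t - 1) (by omega) (by omega) hy)
    exact key hx
  · intro y hy
    have key : detPrimeIdeal k (N - 1) N t (by omega) ≤
        Ideal.comap (Ideal.quotientMap (minorsIdeal (genMatrix k m n) t)
          (projHom k m n) (proj_minors k t))
          (detPrimeIdeal k m n t (by omega)) := by
      rw [detPrimeIdeal, Ideal.map_le_iff_le_comap]
      intro z hz
      rw [Ideal.mem_comap, Ideal.mem_comap, Ideal.quotientMap_mk]
      exact Ideal.mem_map_of_mem _
        (proj_pminors k (t - 1) (by omega) (by omega) hz)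
    exact key hy
end

section
/- Let θ : R → S be a homomorphism of commutative rings of prime characteristic p, and let 𝔭 ⊆ R and 𝔮 ⊆ S be prime ideals with θ(𝔭) ⊆ 𝔮. Suppose there exists an R-linear map T : S → R (i.e., T is additive and T(θ(r)·s) = r·T(s) for all r ∈ R, s ∈ S) such that T(1) = 1 and T(𝔮) ⊆ 𝔭. If S is purely F-regular along 𝔮, then R is purely F-regular along 𝔭. -/
/-- Pure F-regularity descends along pure (split-like) ring homomorphisms. -/
theorem purelyFRegularAlong_of_retraction (p : ℕ) (hp : p.Prime)
    (R S : Type*) [CommRing R] [CommRing S] [CharP R p] [CharP S p]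
    (θ : R →+* S) (𝔭 : Ideal R) (𝔮 : Ideal S) (h𝔭 : 𝔭.IsPrime) (h𝔮 : 𝔮.IsPrime)
    (hθ : ∀ x ∈ 𝔭, θ x ∈ 𝔮)
    (T : S →+ R) (hTlin : ∀ (r : R) (s : S), T (θ r * s) = r * T s)
    (hT1 : T 1 = 1) (hTq : ∀ x ∈ 𝔮, T x ∈ 𝔭)
    (hS : PurelyFRegularAlong p 𝔮) :
    PurelyFRegularAlong p 𝔭 := by
  intro c hc
  have hθc : θ c ∉ 𝔮 := by
    intro h
    apply hc
    have := hTq _ h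
    rwa [show θ c = θ c * 1 by ring, hTlin, hT1, mul_one] at this
  obtain ⟨e, he, φ, hφlin, hφq, hφc⟩ := hS (θ c) hθc
  refine ⟨e, he, T.comp (φ.comp θ.toAddMonoidHom), ?_, ?_, ?_⟩
  · intro a b
    simp only [AddMonoidHom.comp_apply, RingHom.toAddMonoidHom_eq_coe,
      AddMonoidHom.coe_coe, map_mul, map_pow]
    rw [hφlin, hTlin]
  · intro x hx
    exact hTq _ (hφq _ (hθ _ hx))
  · simp only [AddMonoidHom.comp_apply, RingHom.toAddMonoidHom_eq_coe,
      AddMonoidHom.coe_coe, hφc, hT1]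
end

section
/- Let R be a commutative ring of prime characteristic p and let 𝔭 ⊆ R be a prime ideal. If R is purely F-regular along 𝔭, then the polynomial ring R[t] in one variable is purely F-regular along the extended ideal 𝔭·R[t] (the ideal of polynomials all of whose coefficients lie in 𝔭). -/
namespace Polynomial

variable {R : Type*} [CommRing R] (φ : R →+ R) {q : ℕ} (hq : q ≠ 0) (d : ℕ)

noncomputable def contractWith : R[X] →+ R[X] where
  toFun f := ⟨⟨Finsupp.onFinset (Finset.range (f.natDegree + 1))
    (fun n ↦ φ (f.coeff (d + n * q))) fun n hn ↦ by
      contrapose! hn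
      rw [coeff_eq_zero_of_natDegree_lt, map_zero]
      have := Nat.one_le_iff_ne_zero.2 hq
      simp only [Finset.mem_range, not_lt] at hn
      nlinarith⟩⟩
  map_zero' := by ext; simp
  map_add' f g := by ext; simp

@[simp]
theorem coeff_contractWith (f : R[X]) (n : ℕ) :
    (contractWith φ hq d f).coeff n = φ (f.coeff (d + n * q)) := rfl

variable {φ hq d}

theorem contractWith_C_mul {a b : R} (h : ∀ x, φ (a * x) = b * φ x) (f : R[X]) :
    contractWith φ hq d (C a * f) = C b * contractWith φ hq d f := by
  ext n; simp [h]

theorem contractWith_X_pow_mul (hd : d < q) (m : ℕ) (f : R[X]) :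
    contractWith φ hq d (X ^ (m * q) * f) = X ^ m * contractWith φ hq d f := by
  ext n
  simp only [coeff_contractWith, coeff_X_pow_mul']
  by_cases hmn : m ≤ n
  · obtain ⟨k, rfl⟩ := Nat.exists_eq_add_of_le hmn
    rw [if_pos (by nlinarith), if_pos hmn]
    congr 2
    rw [Nat.add_sub_cancel_left, add_mul]; omega
  · rw [if_neg (by nlinarith), if_neg hmn, map_zero]

theorem contractWith_eq_one {c : R[X]} (hc : φ (c.coeff d) = 1) (hdeg : c.natDegree < q) :
    contractWith φ hq d c = 1 := by
  ext n
  rcases n with _ | n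
  · simpa using hc
  · rw [coeff_contractWith, coeff_one, if_neg n.succ_ne_zero,
      coeff_eq_zero_of_natDegree_lt (by nlinarith), map_zero]

theorem isPLinearMap_contractWith {p e : ℕ} [ExpChar R p] (hpe : p ^ e ≠ 0)
    (hφ : IsPLinearMap p e φ) (hd : d < p ^ e) : IsPLinearMap p e (contractWith φ hpe d) := by
  intro g f
  induction g using Polynomial.induction_on' with
  | add g₁ g₂ h₁ h₂ => rw [add_pow_expChar_pow, add_mul, map_add, h₁, h₂, add_mul]
  | monomial m a =>
    rw [← C_mul_X_pow_eq_monomial, mul_pow, ← C_pow, ← pow_mul, mul_assoc,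
      contractWith_C_mul (hφ a), contractWith_X_pow_mul hd, mul_assoc]

theorem contractWith_mem_map_C {I : Ideal R} (hφI : ∀ x ∈ I, φ x ∈ I) {f : R[X]}
    (hf : f ∈ I.map C) : contractWith φ hq d f ∈ I.map C := by
  rw [Ideal.mem_map_C_iff] at hf ⊢
  exact fun n ↦ hφI _ (hf _)

end Polynomial

open Polynomial

section CompatibleSplitting

variable {p : ℕ} {R : Type*} [CommRing R]

def HasCompatibleSplitting (p e : ℕ) (I : Ideal R) (c : R) : Prop :=
  ∃ φ : R →+ R, IsPLinearMap p e φ ∧ (∀ x ∈ I, φ x ∈ I) ∧ φ c = 1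

theorem IsPLinearMap.comp {e f : ℕ} {φ ψ : R →+ R} (hφ : IsPLinearMap p e φ)
    (hψ : IsPLinearMap p f ψ) : IsPLinearMap p (e + f) (φ.comp ψ) := by
  intro a b
  rw [AddMonoidHom.comp_apply, pow_add, pow_mul, hψ, hφ, AddMonoidHom.comp_apply]

theorem IsPLinearMap.comp_mulLeft {e : ℕ} {φ : R →+ R} (hφ : IsPLinearMap p e φ) (r : R) :
    IsPLinearMap p e (φ.comp (AddMonoidHom.mulLeft r)) := by
  intro a b
  simp only [AddMonoidHom.comp_apply, AddMonoidHom.coe_mulLeft, mul_left_comm r]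
  exact hφ a (r * b)

theorem HasCompatibleSplitting.add {e f : ℕ} {I : Ideal R} {c : R}
    (h₁ : HasCompatibleSplitting p e I c) (h₂ : HasCompatibleSplitting p f I c) :
    HasCompatibleSplitting p (e + f) I c := by
  obtain ⟨φ, hφ, hφI, hφc⟩ := h₁
  obtain ⟨ψ, hψ, hψI, hψc⟩ := h₂
  refine ⟨φ.comp (ψ.comp (AddMonoidHom.mulLeft (c ^ p ^ f))), hφ.comp (hψ.comp_mulLeft _),
    fun x hx ↦ hφI _ (hψI _ (I.mul_mem_left _ hx)), ?_⟩
  simp only [AddMonoidHom.comp_apply, AddMonoidHom.coe_mulLeft]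
  rw [hψ, hψc, mul_one, hφc]

theorem HasCompatibleSplitting.succ_mul {e : ℕ} {I : Ideal R} {c : R}
    (h : HasCompatibleSplitting p e I c) (k : ℕ) : HasCompatibleSplitting p ((k + 1) * e) I c := by
  induction k with
  | zero => simpa using h
  | succ k ih => simpa [add_mul] using ih.add h

theorem HasCompatibleSplitting.polynomial [ExpChar R p] {e d : ℕ} {I : Ideal R} {c : R[X]}
    (h : HasCompatibleSplitting p e I (c.coeff d)) (hd : d < p ^ e) (hdeg : c.natDegree < p ^ e) :
    HasCompatibleSplitting p e (I.map C) c := by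
  obtain ⟨φ, hφ, hφI, hφc⟩ := h
  exact ⟨contractWith φ (Nat.zero_lt_of_lt hd).ne' d, isPLinearMap_contractWith _ hφ hd,
    fun _ ↦ contractWith_mem_map_C hφI, contractWith_eq_one hφc hdeg⟩

end CompatibleSplitting

theorem purelyFRegularAlong_polynomial_general (p : ℕ) (hp : p.Prime)
    (R : Type*) [CommRing R] [CharP R p] (𝔭 : Ideal R)
    (h : PurelyFRegularAlong p 𝔭) :
    PurelyFRegularAlong p (𝔭.map (Polynomial.C : R →+* Polynomial R)) := by
  have : ExpChar R p := ExpChar.prime hp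
  intro c hc
  obtain ⟨d, hd⟩ : ∃ d, c.coeff d ∉ 𝔭 := by simpa [Ideal.mem_map_C_iff] using hc
  have hdc : d ≤ c.natDegree := le_natDegree_of_ne_zero fun h0 ↦ hd (h0 ▸ 𝔭.zero_mem)
  obtain ⟨e, he, hsplit⟩ := h _ hd
  set e' := (c.natDegree + 1) * e
  have hdeg : c.natDegree < p ^ e' := calc
    c.natDegree < e' := Nat.lt_of_lt_of_le (Nat.lt_succ_self _) (Nat.le_mul_of_pos_right _ he)
    _ < p ^ e' := Nat.lt_pow_self hp.one_lt
  exact ⟨e', Nat.one_le_iff_ne_zero.2 (by positivity),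
    (HasCompatibleSplitting.succ_mul hsplit _).polynomial (hdc.trans_lt hdeg) hdeg⟩

/-- If `R` is purely F-regular along a prime `𝔭`, then `R[t]` is purely F-regular along the
extended ideal `𝔭 R[t]`. -/
theorem purelyFRegularAlong_polynomial (p : ℕ) (hp : p.Prime)
    (R : Type*) [CommRing R] [CharP R p] (𝔭 : Ideal R) (h𝔭 : 𝔭.IsPrime)
    (h : PurelyFRegularAlong p 𝔭) :
    PurelyFRegularAlong p (𝔭.map (Polynomial.C : R →+* Polynomial R)) :=
  purelyFRegularAlong_polynomial_general p hp R 𝔭 h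
end

section
/- Let R be a commutative ring of prime characteristic p, let e ≥ 1 be an integer, let φ be a p^e-linear map on R, and let a ⊆ R be an ideal with φ(a) ⊆ a. Then: (i) for every ideal b ⊆ R one has φ(a : b) ⊆ a : b, where a : b = {x ∈ R : x·b ⊆ a}; and (ii) if R is noetherian, then φ(q) ⊆ q for every associated prime q of R/a, and φ(√a) ⊆ √a. -/
theorem Ideal.bot_colon_singleton_mk {R : Type*} [CommRing R] (a : Ideal R) (r : R) :
    (⊥ : Submodule R (R ⧸ a)).colon {Ideal.Quotient.mk a r} = a.colon (Ideal.span {r}) := by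
  ext x
  rw [Submodule.mem_colon_singleton, Submodule.mem_bot, Ideal.mem_colon_span_singleton,
    Algebra.smul_def, Ideal.Quotient.algebraMap_eq, ← map_mul, Ideal.Quotient.eq_zero_iff_mem]

namespace IsPLinearMap

variable {p e : ℕ} {R : Type*} [CommRing R] {φ : R →+ R}

theorem map_mem_colon (hφ : IsPLinearMap p e φ) (hp : 0 < p) {a : Ideal R}
    (ha : ∀ x ∈ a, φ x ∈ a) (b : Ideal R) : ∀ x ∈ a.colon b, φ x ∈ a.colon b := by
  intro x hx
  rw [Submodule.mem_colon] at hx ⊢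
  intro y hy
  have hyx : y ^ p ^ e * x ∈ a := mul_comm x _ ▸ hx _ (b.pow_mem_of_mem hy _ (pow_pos hp e))
  rw [smul_eq_mul, mul_comm, ← hφ]
  exact ha _ hyx

theorem pow_map_mem_of_pow_mem (hφ : IsPLinearMap p e φ) (hp : 0 < p) (n : ℕ) :
    ∀ {a : Ideal R}, (∀ x ∈ a, φ x ∈ a) → ∀ {x : R}, x ^ n ∈ a → φ x ^ n ∈ a := by
  induction n with
  | zero => intro a _ x hx; simpa using hx
  | succ n ih =>
    intro a ha x hx
    have hmul : φ x ^ n * x ∈ a := Ideal.mem_colon_span_singleton.1 <|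
      ih (hφ.map_mem_colon hp ha _) (Ideal.mem_colon_span_singleton.2 (pow_succ x n ▸ hx))
    have hfrob : (φ x ^ n) ^ p ^ e * x ∈ a := by
      obtain ⟨k, hk⟩ : ∃ k, p ^ e = k + 1 := Nat.exists_eq_succ_of_ne_zero (pow_pos hp e).ne'
      rw [hk, pow_succ, mul_assoc]
      exact a.mul_mem_left _ hmul
    rw [pow_succ, ← hφ]
    exact ha _ hfrob

theorem map_mem_radical (hφ : IsPLinearMap p e φ) (hp : 0 < p) {a : Ideal R}
    (ha : ∀ x ∈ a, φ x ∈ a) : ∀ x ∈ a.radical, φ x ∈ a.radical :=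
  fun _ ⟨n, hn⟩ => ⟨n, hφ.pow_map_mem_of_pow_mem hp n ha hn⟩

theorem map_mem_of_isAssociatedPrime (hφ : IsPLinearMap p e φ) (hp : 0 < p) {a q : Ideal R}
    (ha : ∀ x ∈ a, φ x ∈ a) (hq : IsAssociatedPrime q (R ⧸ a)) : ∀ x ∈ q, φ x ∈ q := by
  obtain ⟨-, m, rfl⟩ := hq
  obtain ⟨r, rfl⟩ := Ideal.Quotient.mk_surjective m
  rw [Ideal.bot_colon_singleton_mk]
  exact hφ.map_mem_radical hp (hφ.map_mem_colon hp ha _)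

end IsPLinearMap

theorem compatible_colon_assPrimes_radical_general (p e : ℕ) (hp : p.Prime)
    (R : Type*) [CommRing R]
    (φ : R →+ R) (hφ : IsPLinearMap p e φ)
    (a : Ideal R) (ha : ∀ x ∈ a, φ x ∈ a) :
    (∀ b : Ideal R, ∀ x ∈ a.colon b, φ x ∈ a.colon b) ∧
    (IsNoetherianRing R →
      (∀ q : Ideal R, IsAssociatedPrime q (R ⧸ a) → ∀ x ∈ q, φ x ∈ q) ∧
      (∀ x ∈ a.radical, φ x ∈ a.radical)) :=
  ⟨hφ.map_mem_colon hp.pos ha, fun _ =>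
    ⟨fun _ hq => hφ.map_mem_of_isAssociatedPrime hp.pos ha hq, hφ.map_mem_radical hp.pos ha⟩⟩

/-- Basic stability properties of `φ`-compatible ideals: colon ideals, associated primes
and radicals of a compatible ideal are compatible. -/
theorem compatible_colon_assPrimes_radical (p e : ℕ) (hp : p.Prime) (he : 1 ≤ e)
    (R : Type*) [CommRing R] [CharP R p]
    (φ : R →+ R) (hφ : IsPLinearMap p e φ)
    (a : Ideal R) (ha : ∀ x ∈ a, φ x ∈ a) :
    (∀ b : Ideal R, ∀ x ∈ a.colon b, φ x ∈ a.colon b) ∧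
    (IsNoetherianRing R →
      (∀ q : Ideal R, IsAssociatedPrime q (R ⧸ a) → ∀ x ∈ q, φ x ∈ q) ∧
      (∀ x ∈ a.radical, φ x ∈ a.radical)) :=
  compatible_colon_assPrimes_radical_general p e hp R φ hφ a ha
end

section
/- Let R be a noetherian commutative ring of prime characteristic p and let a ⊆ R be an ideal such that R is purely F-regular along a in the lattice sense. Then: (1) for every maximal ideal m of R there exist an integer e ≥ 1 and an a-compatible p^e-linear map φ with φ(R) ⊄ m; (2) a is a radical ideal; and (3) any two distinct minimal primes q₁ ≠ q₂ of a are comaximal, i.e., q₁ + q₂ = R. -/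
/-- An `a`-compatible `p^e`-linear map: a `p^e`-linear map `φ` with `φ a ⊆ a`. -/
def IsCompatiblePLinearMap (p : ℕ) {R : Type*} [CommRing R] (a : Ideal R) (e : ℕ)
    (φ : R →+ R) : Prop :=
  IsPLinearMap p e φ ∧ ∀ x ∈ a, φ x ∈ a

/-- `R` is purely F-regular along `a` in the lattice sense: every minimal prime of `a` is a
center of F-purity for the `a`-compatible maps, and every proper ideal compatible with all
`a`-compatible maps is contained in some minimal prime of `a`. -/
def PurelyFRegularLattice (p : ℕ) {R : Type*} [CommRing R] (a : Ideal R) : Prop :=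
  (∀ q ∈ a.minimalPrimes, ∃ e : ℕ, 1 ≤ e ∧ ∃ φ : R →+ R,
    IsCompatiblePLinearMap p a e φ ∧ ¬ (∀ x : R, φ x ∈ q)) ∧
  (∀ b : Ideal R, b ≠ ⊤ →
    (∀ (e : ℕ), 1 ≤ e → ∀ φ : R →+ R, IsCompatiblePLinearMap p a e φ →
      ∀ x ∈ b, φ x ∈ b) →
    ∃ q ∈ a.minimalPrimes, b ≤ q)

/-!
Every minimal prime `q` of `a` is compatible with all `a`-compatible maps. Indeed, for `x ∈ q`
some `s ∉ q` has `s * xⁿ ∈ a`, and a compatible `φ` with `φ u ∉ q` turns `s * y ^ p ^ e ∈ a`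
into `(s * φ u) * y ∈ a`; descending along Frobenius gives `s' * x ∈ a` with `s' ∉ q`, whence
`s' * φ x ∈ a ⊆ q`. The lattice condition, applied to a maximal ideal at which every
compatible map degenerates, to the colon ideal `a : x` for `x ∈ √a`, and to `q₁ ⊔ q₂`, puts each
inside a minimal prime of `a`, which yields the three claims.
-/

theorem Ideal.exists_mul_pow_mem_of_mem_minimalPrimes {R : Type*} [CommSemiring R]
    {a q : Ideal R} (hq : q ∈ a.minimalPrimes) {x : R} (hx : x ∈ q) :
    ∃ n : ℕ, ∃ s ∉ q, s * x ^ n ∈ a := by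
  have := hq.isPrime
  have hx' : algebraMap R (Localization.AtPrime q) x ∈ (a.map (algebraMap R _)).radical := by
    rw [IsLocalization.AtPrime.radical_map_of_mem_minimalPrimes _ q a hq]
    exact Ideal.mem_map_of_mem _ hx
  obtain ⟨n, hn⟩ := hx'
  rw [← map_pow, IsLocalization.mem_map_algebraMap_iff q.primeCompl] at hn
  obtain ⟨⟨⟨i, hi⟩, ⟨t, ht⟩⟩, hn⟩ := hn
  rw [← map_mul, IsLocalization.eq_iff_exists q.primeCompl] at hn
  obtain ⟨⟨c, hc⟩, hn⟩ := hn
  refine ⟨n, c * t, fun hct => (this.mem_or_mem hct).elim hc ht, ?_⟩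
  have : c * t * x ^ n = c * i := by simpa [mul_comm, mul_left_comm, mul_assoc] using hn
  rw [this]
  exact a.mul_mem_left c hi

section

variable {R : Type*} [CommRing R]

def IsCompatibleIdeal (p : ℕ) (a b : Ideal R) : Prop :=
  ∀ e : ℕ, 1 ≤ e → ∀ φ : R →+ R, IsCompatiblePLinearMap p a e φ → ∀ x ∈ b, φ x ∈ b

def IsFPureAt (p : ℕ) (a q : Ideal R) : Prop :=
  ∃ e : ℕ, 1 ≤ e ∧ ∃ φ : R →+ R, IsCompatiblePLinearMap p a e φ ∧ ¬ ∀ x : R, φ x ∈ q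

namespace IsCompatiblePLinearMap

variable {p e : ℕ} {a : Ideal R} {φ : R →+ R}

theorem mul_map_mem (hφ : IsCompatiblePLinearMap p a e φ) {s r : R} (h : s * r ∈ a) :
    s * φ r ∈ a := by
  rcases Nat.eq_zero_or_eq_succ_pred (p ^ e) with hpe | hpe
  · have : φ r = 0 := by simpa [hpe] using hφ.1 0 r
    simp [this]
  · rw [← hφ.1]
    apply hφ.2
    rw [hpe, pow_succ, mul_assoc]
    exact a.mul_mem_left _ h

variable {q : Ideal R} [q.IsPrime] {u : R}

theorem exists_mul_mem_of_mul_pow_mem (hφ : IsCompatiblePLinearMap p a e φ) (hu : φ u ∉ q)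
    {s y : R} (hs : s ∉ q) (h : s * y ^ p ^ e ∈ a) : ∃ t ∉ q, t * y ∈ a := by
  have key : s * φ (u * y ^ p ^ e) ∈ a :=
    hφ.mul_map_mem (by rw [mul_left_comm]; exact a.mul_mem_left u h)
  rw [mul_comm u, hφ.1] at key
  refine ⟨s * φ u, fun hsu => (‹q.IsPrime›.mem_or_mem hsu).elim hs hu, ?_⟩
  rwa [mul_right_comm, mul_assoc]

theorem exists_mul_mem_of_mul_pow_pow_mem (hφ : IsCompatiblePLinearMap p a e φ) (hu : φ u ∉ q)
    (k : ℕ) {s y : R} (hs : s ∉ q) (h : s * y ^ (p ^ e) ^ k ∈ a) : ∃ t ∉ q, t * y ∈ a := by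
  induction k generalizing y s with
  | zero => exact ⟨s, hs, by simpa using h⟩
  | succ k ih =>
    rw [pow_succ', pow_mul] at h
    obtain ⟨t, ht, hty⟩ := ih hs h
    exact hφ.exists_mul_mem_of_mul_pow_mem hu ht hty

end IsCompatiblePLinearMap

theorem IsCompatibleIdeal.sup {p : ℕ} {a b c : Ideal R} (hb : IsCompatibleIdeal p a b)
    (hc : IsCompatibleIdeal p a c) : IsCompatibleIdeal p a (b ⊔ c) := by
  intro e he φ hφ x hx
  obtain ⟨y, hy, z, hz, rfl⟩ := Submodule.mem_sup.mp hx
  rw [map_add]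
  exact Submodule.add_mem_sup (hb e he φ hφ y hy) (hc e he φ hφ z hz)

theorem isCompatibleIdeal_colon_singleton (p : ℕ) (a : Ideal R) (x : R) :
    IsCompatibleIdeal p a (a.colon {x}) := by
  intro e _ φ hφ r hr
  rw [Submodule.mem_colon_singleton, smul_eq_mul, mul_comm] at hr ⊢
  exact hφ.mul_map_mem hr

theorem isCompatibleIdeal_of_not_isFPureAt {p : ℕ} {a q : Ideal R} (hq : ¬ IsFPureAt p a q) :
    IsCompatibleIdeal p a q := by
  intro e he φ hφ x _
  by_contra hx
  exact hq ⟨e, he, φ, hφ, fun h => hx (h x)⟩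

variable {p : ℕ} {a q : Ideal R}

theorem exists_mul_mem_of_mem_minimalPrimes_of_isFPureAt (hp : 1 < p) (hq : q ∈ a.minimalPrimes)
    (hpure : IsFPureAt p a q) {x : R} (hx : x ∈ q) : ∃ s ∉ q, s * x ∈ a := by
  have := hq.isPrime
  obtain ⟨e, he, φ, hφ, hφq⟩ := hpure
  obtain ⟨u, hu⟩ := not_forall.mp hφq
  obtain ⟨n, s, hs, hsx⟩ := Ideal.exists_mul_pow_mem_of_mem_minimalPrimes hq hx
  have hn : n ≤ (p ^ e) ^ n := (Nat.lt_pow_self (Nat.one_lt_pow (by omega) hp)).le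
  refine hφ.exists_mul_mem_of_mul_pow_pow_mem hu n hs ?_
  rw [← pow_mul_pow_sub x hn, ← mul_assoc]
  exact a.mul_mem_right _ hsx

theorem isCompatibleIdeal_of_mem_minimalPrimes (hp : 1 < p) (hq : q ∈ a.minimalPrimes)
    (hpure : IsFPureAt p a q) : IsCompatibleIdeal p a q := by
  intro e _ φ hφ x hx
  obtain ⟨s, hs, hsx⟩ := exists_mul_mem_of_mem_minimalPrimes_of_isFPureAt hp hq hpure hx
  exact (hq.isPrime.mem_or_mem (hq.le (hφ.mul_map_mem hsx))).resolve_left hs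

namespace PurelyFRegularLattice

theorem isFPureAt_of_isMaximal (h : PurelyFRegularLattice p a) {m : Ideal R}
    (hm : m.IsMaximal) : IsFPureAt p a m := by
  by_contra hm'
  obtain ⟨q, hq, hmq⟩ := h.2 m hm.ne_top (isCompatibleIdeal_of_not_isFPureAt hm')
  obtain rfl := hm.eq_of_le hq.isPrime.ne_top hmq
  exact hm' (h.1 m hq)

theorem radical_eq (h : PurelyFRegularLattice p a) (hp : 1 < p) : a.radical = a := by
  refine le_antisymm (fun x hx => ?_) Ideal.le_radical
  by_contra hxa
  have hcolon : a.colon {x} ≠ ⊤ := by simpa using hxa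
  obtain ⟨q, hq, hle⟩ := h.2 _ hcolon (isCompatibleIdeal_colon_singleton p a x)
  have hxq : x ∈ q := (hq.isPrime.radical_le_iff.mpr hq.le) hx
  obtain ⟨s, hs, hsx⟩ := exists_mul_mem_of_mem_minimalPrimes_of_isFPureAt hp hq (h.1 q hq) hxq
  exact hs (hle (Submodule.mem_colon_singleton.mpr hsx))

theorem sup_eq_top (h : PurelyFRegularLattice p a) (hp : 1 < p) {q₁ q₂ : Ideal R}
    (hq₁ : q₁ ∈ a.minimalPrimes) (hq₂ : q₂ ∈ a.minimalPrimes) (hne : q₁ ≠ q₂) : q₁ ⊔ q₂ = ⊤ := by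
  by_contra htop
  obtain ⟨q, hq, hle⟩ := h.2 _ htop <|
    (isCompatibleIdeal_of_mem_minimalPrimes hp hq₁ (h.1 q₁ hq₁)).sup
      (isCompatibleIdeal_of_mem_minimalPrimes hp hq₂ (h.1 q₂ hq₂))
  obtain ⟨h₁, h₂⟩ := sup_le_iff.mp hle
  exact hne ((le_antisymm h₁ (hq.2 hq₁.1 h₁)).trans (le_antisymm h₂ (hq.2 hq₂.1 h₂)).symm)

end PurelyFRegularLattice

end

theorem fPure_radical_comaximal_of_purelyFRegular_general (p : ℕ) (hp : p.Prime)
    (R : Type*) [CommRing R]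
    (a : Ideal R) (h : PurelyFRegularLattice p a) :
    (∀ m : Ideal R, m.IsMaximal → ∃ e : ℕ, 1 ≤ e ∧ ∃ φ : R →+ R,
      IsCompatiblePLinearMap p a e φ ∧ ¬ (∀ x : R, φ x ∈ m)) ∧
    a.radical = a ∧
    (∀ q₁ ∈ a.minimalPrimes, ∀ q₂ ∈ a.minimalPrimes, q₁ ≠ q₂ → q₁ ⊔ q₂ = ⊤) :=
  ⟨fun _ => h.isFPureAt_of_isMaximal, h.radical_eq hp.one_lt,
    fun _ hq₁ _ hq₂ => h.sup_eq_top hp.one_lt hq₁ hq₂⟩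

/-- If `R` is purely F-regular along `a`, then `(R, 𝒞^[a])` is F-pure, `a` is radical, and the
minimal primes of `a` are pairwise comaximal. -/
theorem fPure_radical_comaximal_of_purelyFRegular (p : ℕ) (hp : p.Prime)
    (R : Type*) [CommRing R] [IsNoetherianRing R] [CharP R p]
    (a : Ideal R) (h : PurelyFRegularLattice p a) :
    (∀ m : Ideal R, m.IsMaximal → ∃ e : ℕ, 1 ≤ e ∧ ∃ φ : R →+ R,
      IsCompatiblePLinearMap p a e φ ∧ ¬ (∀ x : R, φ x ∈ m)) ∧
    a.radical = a ∧
    (∀ q₁ ∈ a.minimalPrimes, ∀ q₂ ∈ a.minimalPrimes, q₁ ≠ q₂ → q₁ ⊔ q₂ = ⊤) :=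
  fPure_radical_comaximal_of_purelyFRegular_general p hp R a h
end

section
/- Let R be a noetherian commutative ring of prime characteristic p and let a ⊆ R be a radical ideal such that R is purely F-regular along a in the lattice sense. Then for every element r ∈ R that lies in no minimal prime of a, there exist an integer e ≥ 1 and an a-compatible p^e-linear map φ on R with φ(r) = 1. -/
section Aux

variable {p : ℕ} {R : Type*} [CommRing R] {a : Ideal R}

/-- Composition of compatible `p`-linear maps is compatible, of additive degree. -/
lemma comp_compat {e f : ℕ} {φ ψ : R →+ R}
    (hφ : IsCompatiblePLinearMap p a e φ) (hψ : IsCompatiblePLinearMap p a f ψ) :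
    IsCompatiblePLinearMap p a (e + f) (φ.comp ψ) := by
  refine ⟨fun x b => ?_, fun x hx => hφ.2 _ (hψ.2 x hx)⟩
  simp only [AddMonoidHom.comp_apply]
  have h1 : x ^ p ^ (e + f) = (x ^ p ^ e) ^ p ^ f := by
    rw [← pow_mul, ← pow_add]
  rw [h1, hψ.1, hφ.1]

/-- Precomposition with left multiplication preserves compatibility. -/
lemma mulLeft_compat {e : ℕ} {φ : R →+ R} (s : R)
    (hφ : IsCompatiblePLinearMap p a e φ) :
    IsCompatiblePLinearMap p a e (φ.comp (AddMonoidHom.mulLeft s)) := by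
  refine ⟨fun x b => ?_, fun x hx => hφ.2 _ (a.mul_mem_left s hx)⟩
  simp only [AddMonoidHom.comp_apply, AddMonoidHom.coe_mulLeft]
  rw [show s * (x ^ p ^ e * b) = x ^ p ^ e * (s * b) by ring, hφ.1]

/-- `z` is a value at `r` of some compatible `p^E`-linear map. -/
def Jmem (p : ℕ) {R : Type*} [CommRing R] (a : Ideal R) (r : R) (E : ℕ) (z : R) : Prop :=
  ∃ φ : R →+ R, IsCompatiblePLinearMap p a E φ ∧ φ r = z

/-- The set of values at `r` of compatible `p^E`-linear maps is an ideal. -/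
def JId (p : ℕ) {R : Type*} [CommRing R] (a : Ideal R) (r : R) (E : ℕ) : Ideal R where
  carrier := {z | Jmem p a r E z}
  zero_mem' := ⟨0, ⟨fun x b => by simp, fun x _ => a.zero_mem⟩, rfl⟩
  add_mem' := by
    rintro x y ⟨φ, hφ, hφr⟩ ⟨ψ, hψ, hψr⟩
    exact ⟨φ + ψ, ⟨fun u b => by
      simp only [AddMonoidHom.add_apply]; rw [hφ.1, hψ.1, mul_add],
      fun u hu => a.add_mem (hφ.2 u hu) (hψ.2 u hu)⟩, by simp [hφr, hψr]⟩
  smul_mem' := by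
    rintro s z ⟨φ, hφ, hφr⟩
    refine ⟨φ.comp (AddMonoidHom.mulLeft (s ^ p ^ E)), mulLeft_compat _ hφ, ?_⟩
    simp only [AddMonoidHom.comp_apply, AddMonoidHom.coe_mulLeft]
    rw [hφ.1, hφr, smul_eq_mul]

lemma mem_JId {r : R} {E : ℕ} {z : R} : z ∈ JId p a r E ↔ Jmem p a r E z := Iff.rfl

/-- Graded multiplicativity: `J_d * J_e ⊆ J_{d+e}`. -/
lemma Jmem.mul {r : R} {d e : ℕ} {α β : R} (hpe : 1 ≤ p ^ e)
    (hα : Jmem p a r d α) (hβ : Jmem p a r e β) :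
    Jmem p a r (d + e) (α * β) := by
  obtain ⟨χ, hχ, hχr⟩ := hα
  obtain ⟨φ, hφ, hφr⟩ := hβ
  have hcomp :
      IsCompatiblePLinearMap p a (e + d)
        ((φ.comp (AddMonoidHom.mulLeft r)).comp
          (χ.comp (AddMonoidHom.mulLeft (α ^ ((p ^ e - 1) * p ^ d))))) :=
    comp_compat (mulLeft_compat r hφ) (mulLeft_compat _ hχ)
  rw [Nat.add_comm d e]
  refine ⟨_, hcomp, ?_⟩
  simp only [AddMonoidHom.comp_apply, AddMonoidHom.coe_mulLeft]
  rw [show α ^ ((p ^ e - 1) * p ^ d) * r = (α ^ (p ^ e - 1)) ^ p ^ d * r by rw [← pow_mul],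
    hχ.1, hχr]
  rw [show r * (α ^ (p ^ e - 1) * α) = α ^ p ^ e * r by
      rw [← pow_succ, Nat.sub_add_cancel hpe]; ring,
    hφ.1, hφr]

lemma Jmem.pow {r : R} {e : ℕ} {c : R} (hp : 0 < p) (hc : Jmem p a r e c) :
    ∀ k : ℕ, 1 ≤ k → Jmem p a r (k * e) (c ^ k) := by
  intro k hk
  induction k with
  | zero => omega
  | succ n ih =>
    rcases Nat.eq_or_lt_of_le hk with h1 | h2
    · have : n = 0 := by omega
      subst this
      simpa using hc
    · have hn : 1 ≤ n := by omega
      have := (ih hn).mul (Nat.one_le_pow _ _ hp) hc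
      rw [show n * e + e = (n + 1) * e by ring] at this
      simpa [pow_succ] using this

end Aux

/-- If `R` is purely F-regular along a radical ideal `a`, then every element outside all
minimal primes of `a` is a principal test element: some `a`-compatible map sends it to `1`. -/
theorem exists_compatible_map_eq_one_of_purelyFRegular (p : ℕ) (hp : p.Prime)
    (R : Type*) [CommRing R] [IsNoetherianRing R] [CharP R p]
    (a : Ideal R) (hrad : a.radical = a) (h : PurelyFRegularLattice p a) :
    ∀ r : R, (∀ q ∈ a.minimalPrimes, r ∉ q) →
      ∃ e : ℕ, 1 ≤ e ∧ ∃ φ : R →+ R, IsCompatiblePLinearMap p a e φ ∧ φ r = 1 := by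
  intro r hr
  classical
  set S : Set R := {z | ∃ e : ℕ, 1 ≤ e ∧ Jmem p a r e z} with hS
  -- Step 1: the span of S is stable under all compatible maps.
  have hstep : ∀ x ∈ Ideal.span S, ∀ e : ℕ, 1 ≤ e → ∀ ψ : R →+ R,
      IsCompatiblePLinearMap p a e ψ → ψ x ∈ Ideal.span S := by
    intro x hx
    induction hx using Submodule.span_induction with
    | mem z hz =>
      intro e he ψ hψ
      obtain ⟨f, hf, φ, hφ, hφr⟩ := hz
      refine Ideal.subset_span ?_
      exact ⟨e + f, by omega, ψ.comp φ, comp_compat hψ hφ, by simp [hφr]⟩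
    | zero =>
      intro e he ψ hψ
      simp only [map_zero]
      exact Ideal.zero_mem _
    | add x y hx hy ihx ihy =>
      intro e he ψ hψ
      rw [map_add]
      exact Ideal.add_mem _ (ihx e he ψ hψ) (ihy e he ψ hψ)
    | smul s x hx ihx =>
      intro e he ψ hψ
      rw [smul_eq_mul]
      have := ihx e he (ψ.comp (AddMonoidHom.mulLeft s)) (mulLeft_compat s hψ)
      simpa using this
  -- Step 2: the span of S is the unit ideal.
  have hspan : Ideal.span S = ⊤ := by
    by_contra hd
    obtain ⟨q, hq, hdq⟩ := h.2 _ hd (fun e he ψ hψ x hx => hstep x hx e he ψ hψ)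
    set c : Ideal R :=
      { carrier := {x | ∀ e : ℕ, 1 ≤ e → ∀ ψ : R →+ R,
          IsCompatiblePLinearMap p a e ψ → ψ x ∈ q}
        zero_mem' := fun e _ ψ _ => by simp only [map_zero]; exact q.zero_mem
        add_mem' := fun {x y} hx hy e he ψ hψ => by
          rw [map_add]; exact q.add_mem (hx e he ψ hψ) (hy e he ψ hψ)
        smul_mem' := fun s x hx e he ψ hψ => by
          rw [smul_eq_mul]
          have := hx e he (ψ.comp (AddMonoidHom.mulLeft s)) (mulLeft_compat s hψ)
          simpa using this } with hc
    have hcne : c ≠ ⊤ := by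
      intro hctop
      obtain ⟨e₀, he₀, φ₀, hφ₀, hnq⟩ := h.1 q hq
      push_neg at hnq
      obtain ⟨x₀, hx₀⟩ := hnq
      have h1c : (1 : R) ∈ c := hctop ▸ Submodule.mem_top
      have := h1c e₀ he₀ (φ₀.comp (AddMonoidHom.mulLeft x₀)) (mulLeft_compat x₀ hφ₀)
      simp only [AddMonoidHom.comp_apply, AddMonoidHom.coe_mulLeft, mul_one] at this
      exact hx₀ this
    have hcstab : ∀ e : ℕ, 1 ≤ e → ∀ ψ : R →+ R, IsCompatiblePLinearMap p a e ψ →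
        ∀ x ∈ c, ψ x ∈ c := by
      intro e he ψ hψ x hx e' he' ψ' hψ'
      have := hx (e' + e) (by omega) (ψ'.comp ψ) (comp_compat hψ' hψ)
      simpa using this
    obtain ⟨q', hq', hcq'⟩ := h.2 c hcne hcstab
    have hrc : r ∈ c := by
      intro e he ψ hψ
      exact hdq (Ideal.subset_span ⟨e, he, ψ, hψ, rfl⟩)
    exact hr q' hq' (hcq' hrc)
  have h1 : (1 : R) ∈ Ideal.span S := hspan ▸ Submodule.mem_top
  -- Step 3: every element of the span has some power in a single-degree ideal.
  have hQ : ∀ x ∈ Ideal.span S, ∃ E : ℕ, 1 ≤ E ∧ ∀ k : ℕ, 1 ≤ k →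
      ∃ m : ℕ, 1 ≤ m ∧ x ^ m ∈ JId p a r (E * k) := by
    intro x hx
    induction hx using Submodule.span_induction with
    | mem z hz =>
      obtain ⟨e, he, hze⟩ := hz
      refine ⟨e, he, fun k hk => ⟨k, hk, ?_⟩⟩
      have := hze.pow hp.pos k hk
      rwa [mem_JId, Nat.mul_comm e k]
    | zero =>
      exact ⟨1, le_refl 1, fun k hk => ⟨1, le_refl 1, by
        simpa using (JId p a r (1 * k)).zero_mem⟩⟩
    | add x y hx hy ihx ihy =>
      obtain ⟨E₁, hE₁, ih₁⟩ := ihx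
      obtain ⟨E₂, hE₂, ih₂⟩ := ihy
      refine ⟨E₁ * E₂, Nat.mul_pos hE₁ hE₂, fun k hk => ?_⟩
      obtain ⟨m₁, hm₁, hx1⟩ := ih₁ (E₂ * k) (Nat.mul_pos hE₂ hk)
      obtain ⟨m₂, hm₂, hy2⟩ := ih₂ (E₁ * k) (Nat.mul_pos hE₁ hk)
      rw [show E₁ * (E₂ * k) = E₁ * E₂ * k by ring] at hx1
      rw [show E₂ * (E₁ * k) = E₁ * E₂ * k by ring] at hy2
      exact ⟨m₁ + m₂ - 1, by omega,
        (JId p a r (E₁ * E₂ * k)).add_pow_add_pred_mem_of_pow_mem hx1 hy2⟩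
    | smul s x hx ihx =>
      obtain ⟨E, hE, ih⟩ := ihx
      refine ⟨E, hE, fun k hk => ?_⟩
      obtain ⟨m, hm, hmem⟩ := ih k hk
      refine ⟨m, hm, ?_⟩
      rw [smul_eq_mul, mul_pow]
      exact (JId p a r (E * k)).mul_mem_left _ hmem
  obtain ⟨E, hE, hk⟩ := hQ 1 h1
  obtain ⟨m, hm, hmem⟩ := hk 1 (le_refl 1)
  rw [one_pow, Nat.mul_one] at hmem
  obtain ⟨φ, hφ, hφr⟩ := hmem
  exact ⟨E, hE, φ, hφ, hφr⟩
end

section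
/- Let R be a commutative ring of prime characteristic p, let r ∈ R, let e_1, …, e_m ≥ 1 be integers, and for each i let φ_i be a p^{e_i}-linear map on R. For a p^{e'}-linear map ψ, let ψ(R·r) denote the ideal of R generated by {ψ(s·r) : s ∈ R}. If φ_1(R·r) + ⋯ + φ_m(R·r) = R, then, setting e := e_1·e_2·⋯·e_m, one has φ_1^{e/e_1}(R·r) + ⋯ + φ_m^{e/e_m}(R·r) = R, where φ_i^{k} denotes the k-fold composite of φ_i (which is a p^{k·e_i}-linear map). -/
section Aux

variable {R : Type*} [CommRing R]

lemma iterate_isPLinearMap (p e : ℕ) (φ : R →+ R) (h : IsPLinearMap p e φ) :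
    ∀ (n : ℕ) (a b : R), (⇑φ)^[n] (a ^ p ^ (e * n) * b) = a * (⇑φ)^[n] b := by
  intro n
  induction n with
  | zero => intro a b; simp
  | succ n ih =>
    intro a b
    have h1 : a ^ p ^ (e * (n + 1)) = (a ^ p ^ (e * n)) ^ p ^ e := by
      rw [← pow_mul, ← pow_add, Nat.mul_succ]
    rw [Function.iterate_succ_apply, Function.iterate_succ_apply, h1,
      h (a ^ p ^ (e * n)) b]
    exact ih a (φ b)

lemma span_elim (p e : ℕ) (φ : R →+ R) (h : IsPLinearMap p e φ) (r : R) (n : ℕ) {x : R}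
    (hx : x ∈ Ideal.span {y : R | ∃ s : R, y = (⇑φ)^[n] (s * r)}) :
    ∃ s : R, x = (⇑φ)^[n] (s * r) := by
  induction hx using Submodule.span_induction with
  | mem x hx => exact hx
  | zero => exact ⟨0, by simp⟩
  | add x y _ _ hx hy =>
    obtain ⟨s, rfl⟩ := hx
    obtain ⟨t, rfl⟩ := hy
    exact ⟨s + t, by rw [add_mul, iterate_map_add]⟩
  | smul c x _ hx =>
    obtain ⟨s, rfl⟩ := hx
    refine ⟨c ^ p ^ (e * n) * s, ?_⟩
    rw [mul_assoc, iterate_isPLinearMap p e φ h n c (s * r), smul_eq_mul]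

/-- The key composition step. -/
lemma step_lemma (p : ℕ) (hp : p.Prime) [CharP R p] (e : ℕ) (φ : R →+ R)
    (h : IsPLinearMap p e φ) (r : R) (C : Ideal R) (n m : ℕ)
    (h1 : ∃ z c, c ∈ C ∧ (1 : R) = (⇑φ)^[n] (z * r) + c)
    (h2 : ∃ w d, d ∈ C ∧ (1 : R) = (⇑φ)^[m] (w * r) + d) :
    ∃ x c, c ∈ C ∧ (1 : R) = (⇑φ)^[n + m] (x * r) + c := by
  haveI := Fact.mk hp
  obtain ⟨z, c, hc, hzc⟩ := h1
  obtain ⟨w, d, hd, hwd⟩ := h2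
  set B := (⇑φ)^[m] (w * r) with hB
  have hQpos : 0 < p ^ (e * n) := pow_pos hp.pos _
  obtain ⟨Q', hQ'⟩ : ∃ Q', p ^ (e * n) = Q' + 1 :=
    ⟨p ^ (e * n) - 1, (Nat.succ_pred_eq_of_pos hQpos).symm⟩
  have hQ : (1 : R) = B ^ p ^ (e * n) + d ^ p ^ (e * n) := by
    calc (1 : R) = (B + d) ^ p ^ (e * n) := by rw [← hwd, one_pow]
    _ = B ^ p ^ (e * n) + d ^ p ^ (e * n) := add_pow_char_pow ..
  set a := z * r * B ^ Q' with ha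
  have key : z * r = a * B + d ^ p ^ (e * n) * (z * r) := by
    have h0 : z * r = (B ^ p ^ (e * n) + d ^ p ^ (e * n)) * (z * r) := by
      rw [← hQ, one_mul]
    conv_lhs => rw [h0]
    rw [hQ', ha]
    ring
  have hx1 : a * B = (⇑φ)^[m] ((a ^ p ^ (e * m) * w) * r) := by
    rw [mul_assoc (a ^ p ^ (e * m)) w r, iterate_isPLinearMap p e φ h m a (w * r)]
  refine ⟨a ^ p ^ (e * m) * w, d * (⇑φ)^[n] (z * r) + c,
    C.add_mem (Ideal.mul_mem_right _ _ hd) hc, ?_⟩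
  have h5 : (⇑φ)^[n] (z * r) =
      (⇑φ)^[n + m] ((a ^ p ^ (e * m) * w) * r) + d * (⇑φ)^[n] (z * r) := by
    calc (⇑φ)^[n] (z * r)
        = (⇑φ)^[n] ((⇑φ)^[m] ((a ^ p ^ (e * m) * w) * r) + d ^ p ^ (e * n) * (z * r)) := by
          rw [← hx1, ← key]
      _ = (⇑φ)^[n] ((⇑φ)^[m] ((a ^ p ^ (e * m) * w) * r))
            + (⇑φ)^[n] (d ^ p ^ (e * n) * (z * r)) := by rw [iterate_map_add]
      _ = (⇑φ)^[n + m] ((a ^ p ^ (e * m) * w) * r) + d * (⇑φ)^[n] (z * r) := by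
          rw [← Function.iterate_add_apply, iterate_isPLinearMap p e φ h n d (z * r)]
  rw [hzc]
  conv_lhs => rw [h5]
  rw [add_assoc]

lemma upgrade_lemma (p : ℕ) (hp : p.Prime) [CharP R p] (e : ℕ) (φ : R →+ R)
    (h : IsPLinearMap p e φ) (r : R) (C : Ideal R)
    (h1 : ∃ z c, c ∈ C ∧ (1 : R) = (⇑φ)^[1] (z * r) + c) :
    ∀ k : ℕ, 1 ≤ k → ∃ z c, c ∈ C ∧ (1 : R) = (⇑φ)^[k] (z * r) + c := by
  intro k hk
  obtain ⟨k', rfl⟩ : ∃ k', k = k' + 1 := ⟨k - 1, (Nat.succ_pred_eq_of_pos hk).symm⟩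
  induction k' with
  | zero => exact h1
  | succ k' ih => exact step_lemma p hp e φ h r C (k' + 1) 1 (ih k'.succ_pos) h1

end Aux

/-- The claim in the proof of Theorem 2.16: if finitely many `p^{e_i}`-linear maps applied to
the ideal `R·r` generate the unit ideal, then so do suitable iterates with a common exponent
`e = e_1 ⋯ e_m`. -/
theorem iterates_span_top (p : ℕ) (hp : p.Prime)
    (R : Type*) [CommRing R] [CharP R p] (r : R)
    (m : ℕ) (e : Fin m → ℕ) (he : ∀ i, 1 ≤ e i)
    (φ : Fin m → R →+ R) (hφ : ∀ i, IsPLinearMap p (e i) (φ i))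
    (hsum : (∑ i : Fin m, Ideal.span {y : R | ∃ s : R, y = φ i (s * r)}) = ⊤) :
    (∑ i : Fin m,
      Ideal.span {y : R | ∃ s : R, y = (⇑(φ i))^[(∏ j : Fin m, e j) / e i] (s * r)}) = ⊤ := by
  classical
  set N : Fin m → ℕ := fun i => (∏ j : Fin m, e j) / e i with hNdef
  have hN : ∀ i, 1 ≤ N i := by
    intro i
    have hdvd : e i ∣ ∏ j : Fin m, e j := Finset.dvd_prod_of_mem e (Finset.mem_univ i)
    have hprod : 1 ≤ ∏ j : Fin m, e j := Finset.one_le_prod' fun j _ => he j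
    exact (Nat.one_le_div_iff (he i)).mpr (Nat.le_of_dvd hprod hdvd)
  set Sp : Fin m → ℕ → Ideal R :=
    fun i n => Ideal.span {y : R | ∃ s : R, y = (⇑(φ i))^[n] (s * r)} with hSp
  have hSp1 : ∀ i, Sp i 1 = Ideal.span {y : R | ∃ s : R, y = φ i (s * r)} := by
    intro i; simp [hSp]
  -- main finset induction
  have main : ∀ F : Finset (Fin m),
      (1 : R) ∈ ∑ i : Fin m, (if i ∈ F then Sp i (N i) else Sp i 1) := by
    intro F
    induction F using Finset.induction_on with
    | empty =>
      simp only [Finset.notMem_empty, if_false, hSp1]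
      rw [← Ideal.eq_top_iff_one, hsum]
    | @insert j F hj ih =>
      set C : Ideal R := ∑ i ∈ Finset.univ.erase j, (if i ∈ F then Sp i (N i) else Sp i 1)
        with hC
      have hsplit : (∑ i : Fin m, (if i ∈ F then Sp i (N i) else Sp i 1))
          = (if j ∈ F then Sp j (N j) else Sp j 1) + C :=
        (Finset.add_sum_erase _ _ (Finset.mem_univ j)).symm
      rw [hsplit, if_neg hj, Submodule.add_eq_sup, Submodule.mem_sup] at ih
      obtain ⟨y, hy, cz, hcz, hyc⟩ := ih
      obtain ⟨s, rfl⟩ := span_elim p (e j) (φ j) (hφ j) r 1 hy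
      have hup := upgrade_lemma p hp (e j) (φ j) (hφ j) r C
        ⟨s, cz, hcz, hyc.symm⟩ (N j) (hN j)
      obtain ⟨z, c, hc, hzc⟩ := hup
      have hsplit2 : (∑ i : Fin m, (if i ∈ insert j F then Sp i (N i) else Sp i 1))
          = Sp j (N j) + C := by
        rw [← Finset.add_sum_erase _ _ (Finset.mem_univ j), if_pos (Finset.mem_insert_self j F)]
        congr 1
        refine Finset.sum_congr rfl fun i hi => ?_
        have hij : i ≠ j := (Finset.mem_erase.mp hi).1
        simp [Finset.mem_insert, hij]
      rw [hsplit2, Submodule.add_eq_sup, Submodule.mem_sup]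
      exact ⟨(⇑(φ j))^[N j] (z * r), Ideal.subset_span ⟨z, rfl⟩, c, hc, hzc.symm⟩
  have := main Finset.univ
  simp only [Finset.mem_univ, if_true] at this
  rw [Ideal.eq_top_iff_one]
  exact this
end

section
/- Let R be a noetherian F-finite normal integral domain of prime characteristic p (F-finite means R is a finitely generated module over its subring of p-th powers), and let 𝔭 ⊆ R be a prime ideal of height 1. Then 𝔭 is a center of F-purity: there exist an integer e ≥ 1 and a p^e-linear map φ on R with φ(𝔭) ⊆ 𝔭 and φ(R) ⊄ 𝔭. -/
/-- `R` is F-finite: `R` is a finitely generated module over its subring of `p`-th powers,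
i.e. there is a finite set spanning `R` with coefficients that are `p`-th powers. -/
def FFinite (p : ℕ) (R : Type*) [CommRing R] : Prop :=
  ∃ s : Finset R, ∀ x : R, ∃ c : R → R, x = ∑ y ∈ s, (c y) ^ p * y

/-- A prime ideal of height one: a nonzero prime admitting no prime strictly between it and
the zero ideal. -/
def IsHeightOnePrime {R : Type*} [CommRing R] (𝔭 : Ideal R) : Prop :=
  𝔭.IsPrime ∧ 𝔭 ≠ ⊥ ∧ ∀ q : Ideal R, q.IsPrime → q < 𝔭 → q = ⊥

/-!
Localizing at `𝔭` gives a DVR `V = R_𝔭` with uniformizer `π`, inside `K = Frac R`. Since `K` is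
a vector space over `K^p`, there is a nonzero `p`-linear map on `K`; a common denominator makes
it map `R`, hence `V`, into itself. Its values on `V` form an ideal `(π^k)` of `V`, so dividing
by `π^k` yields `ψ` with `ψ(V) ⊆ V` and `ψ(V) ⊄ 𝔪`. As `ψ(π^p x) = π ψ(x)`, among the maps
`x ↦ ψ(π^j x)` the last one with `ψ(π^j V) ⊄ 𝔪` also sends `𝔪` into `𝔪`. Finally, F-finiteness
provides `s ∉ 𝔭` such that `s ψ` maps `R` into `R`, and this restriction is the required map.
-/

open Set IsLocalRing

namespace IsPLinearMap

variable {p e : ℕ} {R : Type*} [CommRing R] {ψ : R →+ R}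

theorem comp_mulLeft_s8 (hψ : IsPLinearMap p e ψ) (c : R) :
    IsPLinearMap p e (ψ.comp (AddMonoidHom.mulLeft c)) := fun a b => by
  simpa [mul_left_comm c] using hψ a (c * b)

theorem mulLeft_comp (hψ : IsPLinearMap p e ψ) (c : R) :
    IsPLinearMap p e ((AddMonoidHom.mulLeft c).comp ψ) := fun a b => by
  simp [hψ a b, mul_left_comm c]

theorem exists_restrict {S : Type*} [CommRing S] {f : S →+* R} (hf : Function.Injective f)
    (hψ : IsPLinearMap p e ψ) (h : ∀ x, ψ (f x) ∈ f.range) :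
    ∃ Φ : S →+ S, IsPLinearMap p e Φ ∧ ∀ x, f (Φ x) = ψ (f x) := by
  choose Φ hΦ using h
  refine ⟨AddMonoidHom.mk' Φ fun x y => hf ?_, fun a b => hf ?_, hΦ⟩
  · simp [hΦ]
  · simpa [hΦ] using hψ (f a) (f b)

end IsPLinearMap

theorem exists_isPLinearMap_map_one (p e : ℕ) [Fact p.Prime] (K : Type*) [Field K] [CharP K p] :
    ∃ ψ : K →+ K, IsPLinearMap p e ψ ∧ ψ 1 = 1 := by
  let frob := (iterateFrobenius K p e).rangeRestrictFieldEquiv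
  obtain ⟨l, hl⟩ := Module.Projective.exists_dual_eq_one (iterateFrobenius K p e).fieldRange
    (one_ne_zero : (1 : K) ≠ 0)
  refine ⟨frob.symm.toAddMonoidHom.comp l.toAddMonoidHom, fun a b => ?_, by simp [hl]⟩
  have : a ^ p ^ e * b = frob a • b := rfl
  simp [this]

theorem IsLocalization.exists_mul_algebraMap_mem_range {R V K : Type*} [CommRing R] [CommRing V]
    [CommRing K] [Algebra R V] [Algebra R K] [Algebra V K] [IsScalarTower R V K]
    (M : Submonoid R) [IsLocalization M V] (v : V) :
    ∃ m ∈ M, algebraMap R K m * algebraMap V K v ∈ (algebraMap R K).range := by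
  obtain ⟨⟨r, m⟩, hrm⟩ := IsLocalization.surj M v
  refine ⟨m, m.2, r, ?_⟩
  rw [IsScalarTower.algebraMap_apply R V K, IsScalarTower.algebraMap_apply R V K m, ← map_mul,
    mul_comm, hrm]

theorem FFinite.exists_common_denominator {p : ℕ} {R K : Type*} [CommRing R] [CommRing K]
    [Algebra R K] (hR : FFinite p R) {ψ : K →+ K} (hψ : IsPLinearMap p 1 ψ) (M : Submonoid R)
    (h : ∀ y : R, ∃ m ∈ M, algebraMap R K m * ψ (algebraMap R K y) ∈ (algebraMap R K).range) :
    ∃ m ∈ M, ∀ y : R, algebraMap R K m * ψ (algebraMap R K y) ∈ (algebraMap R K).range := by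
  classical
  obtain ⟨s, hs⟩ := hR
  choose m hmM hm using h
  refine ⟨∏ y ∈ s, m y, prod_mem fun y _ => hmM y, fun x => ?_⟩
  have hgen : ∀ y ∈ s,
      algebraMap R K (∏ z ∈ s, m z) * ψ (algebraMap R K y) ∈ (algebraMap R K).range := by
    intro y hy
    rw [← Finset.mul_prod_erase s m hy, map_mul, mul_comm (algebraMap R K (m y)), mul_assoc]
    exact mul_mem (RingHom.mem_range_self _ _) (hm y)
  obtain ⟨c, rfl⟩ := hs x
  simp only [map_sum, map_mul, map_pow, Finset.mul_sum]
  refine sum_mem fun y hy => ?_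
  have hlin := hψ (algebraMap R K (c y)) (algebraMap R K y)
  rw [pow_one] at hlin
  rw [hlin, mul_left_comm]
  exact mul_mem (RingHom.mem_range_self _ _) (hgen y hy)

section LocalRing

variable {p e : ℕ} {V K : Type*} [CommRing V] [IsLocalRing V] [CommRing K] [Algebra V K]

theorem IsLocalRing.exists_isPLinearMap_compatible {π : V}
    (hπ : maximalIdeal V = Ideal.span {π}) {ψ : K →+ K} (hψ : IsPLinearMap p e ψ)
    (hV : MapsTo ψ (range (algebraMap V K)) (range (algebraMap V K)))
    (hdeg : ¬ MapsTo ψ (range (algebraMap V K)) (algebraMap V K '' maximalIdeal V)) :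
    ∃ ψ' : K →+ K, IsPLinearMap p e ψ' ∧
      MapsTo ψ' (range (algebraMap V K)) (range (algebraMap V K)) ∧
      MapsTo ψ' (algebraMap V K '' maximalIdeal V) (algebraMap V K '' maximalIdeal V) ∧
      ¬ MapsTo ψ' (range (algebraMap V K)) (algebraMap V K '' maximalIdeal V) := by
  let twist (j : ℕ) : K →+ K := ψ.comp (AddMonoidHom.mulLeft (algebraMap V K π ^ j))
  have htwist_pow : MapsTo (twist (p ^ e)) (range (algebraMap V K))
      (algebraMap V K '' maximalIdeal V) := by
    rintro _ ⟨v, rfl⟩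
    obtain ⟨w, hw⟩ := hV (mem_range_self v)
    refine ⟨π * w, hπ ▸ Ideal.mul_mem_right _ _ (Ideal.mem_span_singleton_self π), ?_⟩
    simp [twist, hψ (algebraMap V K π), hw]
  obtain ⟨j, hj, hj₁⟩ := Nat.exists_not_and_succ_of_not_zero_of_exists
    (p := fun j => MapsTo (twist j) (range (algebraMap V K)) (algebraMap V K '' maximalIdeal V))
    (by simpa [twist] using hdeg) ⟨p ^ e, htwist_pow⟩
  refine ⟨twist j, hψ.comp_mulLeft_s8 _, ?_, ?_, hj⟩
  · rintro _ ⟨v, rfl⟩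
    exact hV ⟨π ^ j * v, by simp⟩
  · rintro _ ⟨m, hm, rfl⟩
    rw [SetLike.mem_coe, hπ, Ideal.mem_span_singleton'] at hm
    obtain ⟨c, rfl⟩ := hm
    simpa [twist, pow_succ, mul_assoc, mul_comm, mul_left_comm] using hj₁ (mem_range_self c)

end LocalRing

theorem IsDiscreteValuationRing.exists_isPLinearMap_not_mapsTo_maximalIdeal {p e : ℕ}
    {V K : Type*} [CommRing V] [IsDomain V] [IsDiscreteValuationRing V] [Field K] [Algebra V K]
    [IsFractionRing V K] {ψ : K →+ K} (hψ : IsPLinearMap p e ψ)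
    (hV : MapsTo ψ (range (algebraMap V K)) (range (algebraMap V K)))
    (hne : ∃ v : V, ψ (algebraMap V K v) ≠ 0) :
    ∃ ψ' : K →+ K, IsPLinearMap p e ψ' ∧
      MapsTo ψ' (range (algebraMap V K)) (range (algebraMap V K)) ∧
      ¬ MapsTo ψ' (range (algebraMap V K)) (algebraMap V K '' IsLocalRing.maximalIdeal V) := by
  obtain ⟨π, hπ⟩ := IsDiscreteValuationRing.exists_irreducible V
  have hπK : algebraMap V K π ≠ 0 :=
    (map_ne_zero_iff _ (IsFractionRing.injective V K)).mpr hπ.ne_zero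
  -- `p`-linearity makes the values of `ψ` on `V` an ideal of `V`, hence a power of `(π)`.
  let values : Ideal V :=
    { carrier := {b | ∃ a, ψ (algebraMap V K a) = algebraMap V K b}
      add_mem' := fun ⟨a, ha⟩ ⟨a', ha'⟩ => ⟨a + a', by simp [ha, ha']⟩
      zero_mem' := ⟨0, by simp⟩
      smul_mem' := fun c b ⟨a, ha⟩ => ⟨c ^ p ^ e * a, by simp [hψ (algebraMap V K c), ha]⟩ }
  have hvalues : values ≠ ⊥ := by
    obtain ⟨v, hv⟩ := hne
    obtain ⟨b, hb⟩ := hV (mem_range_self v)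
    refine (Submodule.ne_bot_iff _).mpr ⟨b, ⟨v, hb.symm⟩, ?_⟩
    rintro rfl
    exact hv (by simp [← hb])
  obtain ⟨k, hk⟩ := IsDiscreteValuationRing.ideal_eq_span_pow_irreducible hvalues hπ
  refine ⟨(AddMonoidHom.mulLeft (algebraMap V K π ^ k)⁻¹).comp ψ, hψ.mulLeft_comp _, ?_, ?_⟩
  · rintro _ ⟨a, rfl⟩
    obtain ⟨b, hb⟩ := hV (mem_range_self a)
    have hb' : b ∈ values := ⟨a, hb.symm⟩
    rw [hk, Ideal.mem_span_singleton'] at hb'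
    obtain ⟨c, rfl⟩ := hb'
    refine ⟨c, ?_⟩
    simp [← hb]
    field_simp
  · obtain ⟨a, ha⟩ : π ^ k ∈ values := hk ▸ Ideal.mem_span_singleton_self _
    intro h
    obtain ⟨m, hm, hma⟩ := h (mem_range_self a)
    have : m = 1 := IsFractionRing.injective V K (by simp [hma, ha, hπK])
    exact (IsLocalRing.maximalIdeal.isMaximal V).ne_top ((Ideal.eq_top_iff_one _).mpr (this ▸ hm))

theorem IsDiscreteValuationRing.exists_isPLinearMap_compatible {p e : ℕ}
    {V K : Type*} [CommRing V] [IsDomain V] [IsDiscreteValuationRing V] [Field K] [Algebra V K]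
    [IsFractionRing V K] {ψ : K →+ K} (hψ : IsPLinearMap p e ψ)
    (hV : MapsTo ψ (range (algebraMap V K)) (range (algebraMap V K)))
    (hne : ∃ v : V, ψ (algebraMap V K v) ≠ 0) :
    ∃ ψ' : K →+ K, IsPLinearMap p e ψ' ∧
      MapsTo ψ' (range (algebraMap V K)) (range (algebraMap V K)) ∧
      MapsTo ψ' (algebraMap V K '' IsLocalRing.maximalIdeal V)
        (algebraMap V K '' IsLocalRing.maximalIdeal V) ∧
      ¬ MapsTo ψ' (range (algebraMap V K)) (algebraMap V K '' IsLocalRing.maximalIdeal V) := by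
  obtain ⟨ψ₁, hψ₁, hψ₁V, hψ₁deg⟩ := exists_isPLinearMap_not_mapsTo_maximalIdeal hψ hV hne
  obtain ⟨π, hπ⟩ := exists_irreducible V
  exact IsLocalRing.exists_isPLinearMap_compatible hπ.maximalIdeal_eq hψ₁ hψ₁V hψ₁deg

section Localization

variable {R V K : Type*} [CommRing R] [CommRing V] [CommRing K] [Algebra R V] [Algebra R K]
  [Algebra V K] [IsScalarTower R V K]

theorem algebraMap_mul_mem_image_ideal_iff {u : V} (hu : IsUnit u) (J : Ideal V) (z : K) :
    algebraMap V K u * z ∈ algebraMap V K '' J ↔ z ∈ algebraMap V K '' J := by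
  constructor
  · rintro ⟨j, hj, hjz⟩
    refine ⟨↑hu.unit⁻¹ * j, J.mul_mem_left _ hj, ?_⟩
    rw [map_mul, hjz, ← mul_assoc, ← map_mul, IsUnit.val_inv_mul, map_one, one_mul]
  · rintro ⟨j, hj, rfl⟩
    exact ⟨u * j, J.mul_mem_left _ hj, map_mul _ _ _⟩

theorem IsPLinearMap.mapsTo_image_ideal_of_localization {p e : ℕ} (hp : p ≠ 0)
    (M : Submonoid R) [IsLocalization M V] {ψ : K →+ K} (hψ : IsPLinearMap p e ψ) (J : Ideal V)
    (h : ∀ r : R, ψ (algebraMap R K r) ∈ algebraMap V K '' J) :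
    MapsTo ψ (range (algebraMap V K)) (algebraMap V K '' J) := by
  rintro _ ⟨v, rfl⟩
  obtain ⟨⟨r, s⟩, hrs⟩ := IsLocalization.surj M v
  have hq : 1 ≤ p ^ e := Nat.one_le_pow _ _ (Nat.pos_of_ne_zero hp)
  have hsv : algebraMap R V (s ^ (p ^ e - 1) * r) = algebraMap R V s ^ p ^ e * v := by
    rw [map_mul, map_pow, ← hrs]
    conv_rhs => rw [← Nat.sub_add_cancel hq]
    ring
  have hψsv : ψ (algebraMap R K (s ^ (p ^ e - 1) * r)) =
      algebraMap V K (algebraMap R V s) * ψ (algebraMap V K v) := by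
    rw [IsScalarTower.algebraMap_apply R V K, hsv, map_mul, map_pow, hψ]
  rw [← algebraMap_mul_mem_image_ideal_iff (IsLocalization.map_units V s), ← hψsv]
  exact h _

theorem IsPLinearMap.mapsTo_range_of_localization {p e : ℕ} (hp : p ≠ 0) (M : Submonoid R)
    [IsLocalization M V] {ψ : K →+ K} (hψ : IsPLinearMap p e ψ)
    (h : ∀ r : R, ψ (algebraMap R K r) ∈ (algebraMap R K).range) :
    MapsTo ψ (range (algebraMap V K)) (range (algebraMap V K)) := by
  simpa using hψ.mapsTo_image_ideal_of_localization hp M ⊤ fun r => by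
    obtain ⟨b, hb⟩ := h r
    exact ⟨algebraMap R V b, trivial, by rw [← IsScalarTower.algebraMap_apply, hb]⟩

end Localization

theorem IsHeightOnePrime.isDiscreteValuationRing_localization {R : Type*} [CommRing R]
    [IsDomain R] [IsNoetherianRing R] [IsIntegrallyClosed R] {𝔭 : Ideal R} [𝔭.IsPrime]
    (h𝔭 : IsHeightOnePrime 𝔭) : IsDiscreteValuationRing (Localization.AtPrime 𝔭) := by
  have hnf := IsLocalization.AtPrime.not_isField R h𝔭.2.1 (Localization.AtPrime 𝔭)
  have := IsLocalization.isNoetherianRing 𝔭.primeCompl (Localization.AtPrime 𝔭) inferInstance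
  have := isIntegrallyClosed_of_isLocalization (Localization.AtPrime 𝔭) 𝔭.primeCompl
    𝔭.primeCompl_le_nonZeroDivisors
  have huniq : ∀ Q : Ideal (Localization.AtPrime 𝔭), Q ≠ ⊥ → Q.IsPrime → Q = maximalIdeal _ := by
    intro Q hQ hQprime
    have hle : Q.under R ≤ 𝔭 := (Ideal.comap_mono (le_maximalIdeal hQprime.ne_top)).trans_eq
      (IsLocalization.AtPrime.under_maximalIdeal _ 𝔭)
    have hQ𝔭 : Q.under R = 𝔭 := by
      by_contra hne
      exact (IsLocalization.bot_lt_under_prime 𝔭.primeCompl _ 𝔭.primeCompl_le_nonZeroDivisors Q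
        hQ).ne' (h𝔭.2.2 _ inferInstance (lt_of_le_of_ne hle hne))
    rw [← IsLocalization.map_under 𝔭.primeCompl _ Q, hQ𝔭, Localization.AtPrime.map_eq_maximalIdeal]
  have hdvr : IsIntegrallyClosed (Localization.AtPrime 𝔭) ∧
      ∃! P : Ideal (Localization.AtPrime 𝔭), P ≠ ⊥ ∧ P.IsPrime := ⟨inferInstance, maximalIdeal _,
    ⟨isField_iff_maximalIdeal_eq.not.mp hnf, inferInstance⟩, fun Q hQ => huniq Q hQ.1 hQ.2⟩
  exact ((IsDiscreteValuationRing.TFAE _ hnf).out 0 3).mpr hdvr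

section AtPrime

variable {R : Type*} [CommRing R] [IsDomain R] (𝔭 : Ideal R) [𝔭.IsPrime]

local notation "K" => FractionRing R
local notation "V" => Localization.AtPrime 𝔭

theorem algebraMap_mem_image_maximalIdeal_iff (x : R) :
    algebraMap R K x ∈ algebraMap V K '' maximalIdeal V ↔ x ∈ 𝔭 := by
  rw [IsScalarTower.algebraMap_apply R V, (IsFractionRing.injective _ _).mem_set_image,
    SetLike.mem_coe, IsLocalization.AtPrime.to_map_mem_maximal_iff V 𝔭]

theorem exists_isPLinearMap_compatible_of_localization {p : ℕ} (hp : p ≠ 0) (hR : FFinite p R)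
    {ψ : K →+ K} (hψ : IsPLinearMap p 1 ψ)
    (hV : MapsTo ψ (range (algebraMap V K)) (range (algebraMap V K)))
    (h𝔪 : MapsTo ψ (algebraMap V K '' maximalIdeal V) (algebraMap V K '' maximalIdeal V))
    (hdeg : ¬ MapsTo ψ (range (algebraMap V K)) (algebraMap V K '' maximalIdeal V)) :
    ∃ φ : R →+ R, IsPLinearMap p 1 φ ∧ (∀ x ∈ 𝔭, φ x ∈ 𝔭) ∧ ¬ ∀ x, φ x ∈ 𝔭 := by
  obtain ⟨m, hm, hmR⟩ := hR.exists_common_denominator hψ 𝔭.primeCompl fun y => by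
    obtain ⟨v, hv⟩ := hV (mem_range_self (algebraMap R V y))
    obtain ⟨m, hm, hmv⟩ : ∃ m ∈ 𝔭.primeCompl,
        algebraMap R K m * algebraMap V K v ∈ (algebraMap R K).range :=
      IsLocalization.exists_mul_algebraMap_mem_range _ v
    exact ⟨m, hm, by rwa [hv, ← IsScalarTower.algebraMap_apply] at hmv⟩
  obtain ⟨φ, hφ, hφψ⟩ := (hψ.mulLeft_comp (algebraMap R K m)).exists_restrict
    (IsFractionRing.injective R K) hmR
  have hmem : ∀ x, φ x ∈ 𝔭 ↔ ψ (algebraMap R K x) ∈ algebraMap V K '' maximalIdeal V :=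
    fun x => by
      rw [← algebraMap_mem_image_maximalIdeal_iff, hφψ, AddMonoidHom.comp_apply,
        AddMonoidHom.coe_mulLeft, IsScalarTower.algebraMap_apply R V,
        algebraMap_mul_mem_image_ideal_iff
          ((IsLocalization.AtPrime.isUnit_to_map_iff V 𝔭 m).mpr hm)]
  refine ⟨φ, hφ, fun x hx => (hmem x).mpr (h𝔪 ((algebraMap_mem_image_maximalIdeal_iff 𝔭 x).mpr hx)),
    fun hall => hdeg ?_⟩
  exact hψ.mapsTo_image_ideal_of_localization hp 𝔭.primeCompl _ fun r => (hmem r).mp (hall r)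

end AtPrime

/-- In a noetherian F-finite normal domain, every height-one prime is a center of F-purity. -/
theorem heightOnePrime_is_center_of_FPurity (p : ℕ) (hp : p.Prime)
    (R : Type*) [CommRing R] [IsDomain R] [IsNoetherianRing R] [IsIntegrallyClosed R]
    [CharP R p] (hff : FFinite p R)
    (𝔭 : Ideal R) (h𝔭 : IsHeightOnePrime 𝔭) :
    ∃ e : ℕ, 1 ≤ e ∧ ∃ φ : R →+ R, IsPLinearMap p e φ ∧
      (∀ x ∈ 𝔭, φ x ∈ 𝔭) ∧ ¬ (∀ x : R, φ x ∈ 𝔭) := by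
  have := h𝔭.1
  have : Fact p.Prime := ⟨hp⟩
  have : CharP (FractionRing R) p :=
    charP_of_injective_algebraMap (IsFractionRing.injective R (FractionRing R)) p
  have := h𝔭.isDiscreteValuationRing_localization
  obtain ⟨ψ₀, hψ₀, hψ₀1⟩ := exists_isPLinearMap_map_one p 1 (FractionRing R)
  obtain ⟨d, hd, hdR⟩ := hff.exists_common_denominator hψ₀ (nonZeroDivisors R) fun y => by
    simpa using IsLocalization.exists_mul_algebraMap_mem_range (nonZeroDivisors R)
      (K := FractionRing R) (ψ₀ (algebraMap R (FractionRing R) y))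
  have hψ₁ := hψ₀.mulLeft_comp (algebraMap R (FractionRing R) d)
  obtain ⟨ψ, hψ, hψV, hψ𝔪, hψdeg⟩ := IsDiscreteValuationRing.exists_isPLinearMap_compatible hψ₁
    (hψ₁.mapsTo_range_of_localization (V := Localization.AtPrime 𝔭) hp.ne_zero 𝔭.primeCompl hdR)
    ⟨1, by simp [hψ₀1, nonZeroDivisors.ne_zero hd]⟩
  exact ⟨1, le_rfl,
    exists_isPLinearMap_compatible_of_localization 𝔭 hp.ne_zero hff hψ hψV hψ𝔪 hψdeg⟩
end

section
/- Let k be a field and let m ≥ n ≥ t ≥ 2 and κ > n be integers. Let x̃ be an m×κ matrix of indeterminates and let x be its m×n submatrix consisting of the first n columns. Let S := k[x̃]/I_t(x̃) be the generic determinantal ring. In S, let 𝔭S denote the image of the ideal I_{t−1}(x') of (t−1)×(t−1) minors of the submatrix x' of the first t−1 rows of x, and let 𝔮 denote the image of the ideal I_{t−1}(x̃') of (t−1)×(t−1) minors of the submatrix x̃' of the first t−1 rows of x̃ (so 𝔮 is a height-one prime ideal of S). Then the extensions of 𝔭S and of 𝔮 to the localization S_𝔮 of S at 𝔮 coincide: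 𝔭·S_𝔮 = 𝔮·S_𝔮; equivalently, the 𝔮-primary component of 𝔭S is 𝔮 itself. -/
open MvPolynomial Matrix

lemma minorsIdeal_def {A : Type*} [CommRing A] {a b : ℕ} (M : Matrix (Fin a) (Fin b) A)
    (t : ℕ) : minorsIdeal M t =
  Ideal.span { d : A | ∃ (r : Fin t → Fin a) (c : Fin t → Fin b),
    Function.Injective r ∧ Function.Injective c ∧ d = (M.submatrix r c).det } := rfl

lemma dj_identity' {F : Type*} [CommRing F] [IsDomain F] {r : ℕ}
    (A : Matrix (Fin (r+2)) (Fin (r+2)) F) (hA : A.det ≠ 0)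
    (p1 p2 : Fin (r+2)) (hp1 : (p1 : ℕ) = r) (hp2 : (p2 : ℕ) = r + 1)
    (E : Matrix (Fin r) (Fin r) F)
    (hE : E = A.submatrix (Fin.castLE (by omega)) (Fin.castLE (by omega))) :
    (A.submatrix p1.succAbove p1.succAbove).det * (A.submatrix p2.succAbove p2.succAbove).det
      - (A.submatrix p2.succAbove p1.succAbove).det * (A.submatrix p1.succAbove p2.succAbove).det
    = E.det * A.det := by
  classical
  subst hE
  set Y : Matrix (Fin (r+2)) (Fin (r+2)) F :=
    Matrix.of (fun (i j : Fin (r+2)) =>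
      if (j : ℕ) < r then (if i = j then (1:F) else 0) else adjugate A i j) with hYdef
  have hAY : A * Y = Matrix.of (fun (i j : Fin (r+2)) =>
      if (j : ℕ) < r then A i j else A.det * (if i = j then (1:F) else 0)) := by
    ext i j
    by_cases h : (j : ℕ) < r
    · simp only [Matrix.mul_apply, hYdef, Matrix.of_apply, h, if_true]
      rw [Finset.sum_eq_single j]
      · simp
      · intro b _ hb; simp [hb]
      · simp
    · have h2 : (A * Y) i j = (A * adjugate A) i j := by
        simp only [Matrix.mul_apply, hYdef, Matrix.of_apply, h, if_false]
      simp only [Matrix.of_apply, h, if_false]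
      rw [h2, Matrix.mul_adjugate, Matrix.smul_apply, Matrix.one_apply, smul_eq_mul]
  set e : Fin r ⊕ Fin 2 ≃ Fin (r + 2) := finSumFinEquiv with hedef
  have hemix : ∀ (i : Fin r) (j : Fin 2), e (Sum.inl i) ≠ e (Sum.inr j) := by
    intro i j h
    exact absurd (e.injective h) (by simp)
  have hel : ∀ (i : Fin r), ((e (Sum.inl i) : Fin (r+2)) : ℕ) = (i : ℕ) := by
    intro i; simp [hedef, finSumFinEquiv_apply_left]
  have her : ∀ (i : Fin 2), ((e (Sum.inr i) : Fin (r+2)) : ℕ) = r + (i : ℕ) := by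
    intro i; simp [hedef, finSumFinEquiv_apply_right]
  have hdAY : (A * Y).det =
      (A.submatrix (Fin.castLE (by omega)) (Fin.castLE (by omega)) :
        Matrix (Fin r) (Fin r) F).det * (A.det * A.det) := by
    have hsub : (A * Y).submatrix e e = Matrix.fromBlocks
        (A.submatrix (Fin.castLE (by omega)) (Fin.castLE (by omega)))
        0
        ((A * Y).submatrix (fun i => e (Sum.inr i)) (fun j => e (Sum.inl j)))
        (A.det • (1 : Matrix (Fin 2) (Fin 2) F)) := by
      ext i j
      cases i with
      | inl i =>
        cases j with
        | inl j =>
          have hj : ((e (Sum.inl j) : Fin (r+2)) : ℕ) < r := by rw [hel]; exact j.isLt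
          simp only [Matrix.submatrix_apply, hAY, Matrix.of_apply, hj, if_true,
            Matrix.fromBlocks_apply₁₁]
          congr 1 <;> · apply Fin.ext; simp [hel, Fin.coe_castLE]
        | inr j =>
          have hj : ¬ ((e (Sum.inr j) : Fin (r+2)) : ℕ) < r := by rw [her]; omega
          simp only [Matrix.submatrix_apply, hAY, Matrix.of_apply, hj, if_false,
            Matrix.fromBlocks_apply₁₂, Matrix.zero_apply]
          rw [if_neg (hemix i j), mul_zero]
      | inr i =>
        cases j with
        | inl j => simp [Matrix.fromBlocks_apply₂₁]
        | inr j =>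
          have hj : ¬ ((e (Sum.inr j) : Fin (r+2)) : ℕ) < r := by rw [her]; omega
          simp only [Matrix.submatrix_apply, hAY, Matrix.of_apply, hj, if_false,
            Matrix.fromBlocks_apply₂₂, Matrix.smul_apply, Matrix.one_apply, smul_eq_mul]
          congr 1
          by_cases hij : i = j
          · subst hij; simp
          · rw [if_neg (fun h => hij (Sum.inr_injective (e.injective h))), if_neg hij]
    calc (A * Y).det = ((A * Y).submatrix e e).det := (Matrix.det_submatrix_equiv_self e _).symm
      _ = _ := by
        rw [hsub, Matrix.det_fromBlocks_zero₁₂, Matrix.det_smul, Matrix.det_one, mul_one]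
        rw [Fintype.card_fin]
        ring
  have hdY : Y.det = adjugate A p1 p1 * adjugate A p2 p2
      - adjugate A p1 p2 * adjugate A p2 p1 := by
    have hsub : Y.submatrix e e = Matrix.fromBlocks
        (1 : Matrix (Fin r) (Fin r) F)
        (Y.submatrix (fun i => e (Sum.inl i)) (fun j => e (Sum.inr j)))
        0
        ((adjugate A).submatrix (fun i => e (Sum.inr i)) (fun j => e (Sum.inr j))) := by
      ext i j
      cases i with
      | inl i =>
        cases j with
        | inl j =>
          have hj : ((e (Sum.inl j) : Fin (r+2)) : ℕ) < r := by rw [hel]; exact j.isLt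
          simp only [Matrix.submatrix_apply, hYdef, Matrix.of_apply, hj, if_true,
            Matrix.fromBlocks_apply₁₁, Matrix.one_apply]
          by_cases hij : i = j
          · subst hij; simp
          · rw [if_neg (fun h => hij (Sum.inl_injective (e.injective h))), if_neg hij]
        | inr j => simp [Matrix.fromBlocks_apply₁₂]
      | inr i =>
        cases j with
        | inl j =>
          have hj : ((e (Sum.inl j) : Fin (r+2)) : ℕ) < r := by rw [hel]; exact j.isLt
          simp only [Matrix.submatrix_apply, hYdef, Matrix.of_apply, hj, if_true,
            Matrix.fromBlocks_apply₂₁, Matrix.zero_apply]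
          rw [if_neg (fun h => (hemix j i) h.symm)]
        | inr j =>
          have hj : ¬ ((e (Sum.inr j) : Fin (r+2)) : ℕ) < r := by rw [her]; omega
          simp only [Matrix.submatrix_apply, hYdef, Matrix.of_apply, hj, if_false,
            Matrix.fromBlocks_apply₂₂]
    have h00 : e (Sum.inr (0 : Fin 2)) = p1 := by
      apply Fin.ext; rw [her, hp1]; simp
    have h11 : e (Sum.inr (1 : Fin 2)) = p2 := by
      apply Fin.ext; rw [her, hp2]; simp
    calc Y.det = (Y.submatrix e e).det := (Matrix.det_submatrix_equiv_self e _).symm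
      _ = _ := by
        rw [hsub, Matrix.det_fromBlocks_zero₂₁, Matrix.det_one, one_mul,
          Matrix.det_fin_two]
        simp only [Matrix.submatrix_apply, h00, h11]
  have hmul : A.det * Y.det = A.det *
      ((A.submatrix (Fin.castLE (by omega)) (Fin.castLE (by omega)) :
        Matrix (Fin r) (Fin r) F).det * A.det) := by
    rw [← Matrix.det_mul, hdAY]; ring
  have hC := mul_left_cancel₀ hA hmul
  rw [hdY] at hC
  have Ha : adjugate A p1 p1 = (A.submatrix p1.succAbove p1.succAbove).det := by
    rw [Matrix.adjugate_fin_succ_eq_det_submatrix, hp1,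
      show ((-1 : F)) ^ (r + r) = 1 from Even.neg_one_pow ⟨r, rfl⟩, one_mul]
  have Hb : adjugate A p2 p2 = (A.submatrix p2.succAbove p2.succAbove).det := by
    rw [Matrix.adjugate_fin_succ_eq_det_submatrix, hp2,
      show ((-1 : F)) ^ ((r+1) + (r+1)) = 1 from Even.neg_one_pow ⟨r+1, rfl⟩, one_mul]
  have Hc : adjugate A p1 p2 = -(A.submatrix p2.succAbove p1.succAbove).det := by
    rw [Matrix.adjugate_fin_succ_eq_det_submatrix, hp1, hp2,
      show ((-1 : F)) ^ ((r+1) + r) = -1 from Odd.neg_one_pow ⟨r, by ring⟩, neg_one_mul]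
  have Hd : adjugate A p2 p1 = -(A.submatrix p1.succAbove p2.succAbove).det := by
    rw [Matrix.adjugate_fin_succ_eq_det_submatrix, hp1, hp2,
      show ((-1 : F)) ^ (r + (r+1)) = -1 from Odd.neg_one_pow ⟨r, by ring⟩, neg_one_mul]
  rw [Ha, Hb, Hc, Hd] at hC
  linear_combination hC


lemma snoc_injective' {α : Type*} {a : ℕ} {d : Fin a → α} {x : α}
    (hd : Function.Injective d) (hx : ∀ i, d i ≠ x) :
    Function.Injective (Fin.snoc d x : Fin (a+1) → α) := by
  intro i j h
  induction i using Fin.lastCases with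
  | last =>
    induction j using Fin.lastCases with
    | last => rfl
    | cast j =>
      rw [Fin.snoc_last, Fin.snoc_castSucc] at h
      exact absurd h.symm (hx j)
  | cast i =>
    induction j using Fin.lastCases with
    | last =>
      rw [Fin.snoc_last, Fin.snoc_castSucc] at h
      exact absurd h (hx i)
    | cast j =>
      rw [Fin.snoc_castSucc, Fin.snoc_castSucc] at h
      exact congrArg Fin.castSucc (hd h)

/-- Evaluating the generic matrix at the indicator of the graph of `(r', c')` turns the
corresponding minor into `1`. -/
lemma aeval_indicator_det {k : Type*} [CommRing k] {m κ a : ℕ}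
    (r' : Fin a → Fin m) (c' : Fin a → Fin κ)
    (hr : Function.Injective r') (hc : Function.Injective c') :
    MvPolynomial.aeval (fun p : Fin m × Fin κ =>
      if ∃ l, r' l = p.1 ∧ c' l = p.2 then (1:k) else 0)
      (((genMatrix k m κ).submatrix r' c').det) = 1 := by
  classical
  set pt : Fin m × Fin κ → k := fun p =>
    if ∃ l, r' l = p.1 ∧ c' l = p.2 then (1:k) else 0 with hpt
  rw [AlgHom.map_det]
  have : ((MvPolynomial.aeval pt : MvPolynomial (Fin m × Fin κ) k →ₐ[k] k).mapMatrix
      ((genMatrix k m κ).submatrix r' c')) = 1 := by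
    ext i j
    simp only [AlgHom.mapMatrix_apply, Matrix.map_apply, Matrix.submatrix_apply]
    have : (genMatrix k m κ) (r' i) (c' j) = MvPolynomial.X (r' i, c' j) := rfl
    rw [this]
    simp only [MvPolynomial.aeval_X, hpt]
    by_cases hij : i = j
    · subst hij
      rw [if_pos ⟨i, rfl, rfl⟩, Matrix.one_apply_eq]
    · rw [if_neg, Matrix.one_apply_ne hij]
      rintro ⟨l, hl1, hl2⟩
      exact hij ((hr hl1).symm.trans (hc hl2) ▸ rfl)
  rw [this, Matrix.det_one]

/-- Evaluating the generic matrix at a point whose `r' l` row vanishes kills the minor. -/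
lemma aeval_indicator_det_zero {k : Type*} [CommRing k] {m κ b : ℕ}
    (pt : Fin m × Fin κ → k)
    (r' : Fin b → Fin m) (c' : Fin b → Fin κ)
    (l : Fin b) (h0 : ∀ j, pt (r' l, j) = 0) :
    MvPolynomial.aeval pt (((genMatrix k m κ).submatrix r' c').det) = 0 := by
  rw [AlgHom.map_det]
  apply Matrix.det_eq_zero_of_row_eq_zero l
  intro j
  simp only [AlgHom.mapMatrix_apply, Matrix.map_apply, Matrix.submatrix_apply]
  rw [show (genMatrix k m κ) (r' l) (c' j) = MvPolynomial.X (r' l, c' j) from rfl,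
    MvPolynomial.aeval_X]
  exact h0 _

set_option maxHeartbeats 1000000 in
set_option synthInstance.maxHeartbeats 200000 in
/-- In the determinantal ring `S = k[x̃]/I_t(x̃)` (with `x` the first `n` columns of the
generic `m × κ` matrix `x̃`), the extension of `𝔭 = I_{t-1}(x')` to the localization at the
height-one prime `𝔮 = I_{t-1}(x̃')·S` agrees with the extension of `𝔮`, i.e. the `𝔮`-primary
component of `𝔭S` is `𝔮`. -/
theorem pS_localization_eq_q (k : Type*) [Field k] (m n t κ : ℕ)
    (ht : 2 ≤ t) (hn : t ≤ n) (hm : n ≤ m) (hκ : n < κ)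
    (pS q : Ideal (MvPolynomial (Fin m × Fin κ) k ⧸ minorsIdeal (genMatrix k m κ) t))
    (hpS : pS = (minorsIdeal ((genMatrix k m κ).submatrix
          ((Fin.castLE (by omega : t - 1 ≤ m)) : Fin (t - 1) → Fin m)
          ((Fin.castLE (by omega : n ≤ κ)) : Fin n → Fin κ)) (t - 1)).map
        (Ideal.Quotient.mk (minorsIdeal (genMatrix k m κ) t)))
    (hq : q = (minorsIdeal ((genMatrix k m κ).submatrix
          ((Fin.castLE (by omega : t - 1 ≤ m)) : Fin (t - 1) → Fin m) id) (t - 1)).map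
        (Ideal.Quotient.mk (minorsIdeal (genMatrix k m κ) t)))
    [hqprime : q.IsPrime] :
    pS.map (algebraMap _ (Localization.AtPrime q)) =
      q.map (algebraMap _ (Localization.AtPrime q)) := by
  classical
  obtain ⟨t', rfl⟩ : ∃ a, t = a + 2 := ⟨t - 2, by omega⟩
  have h1m : t' + 1 ≤ m := by omega
  have h2m : t' + 2 ≤ m := by omega
  have hnκ : n ≤ κ := by omega
  set S := MvPolynomial (Fin m × Fin κ) k ⧸ minorsIdeal (genMatrix k m κ) (t'+2) with hS
  set F := algebraMap S (Localization.AtPrime q) with hF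
  set mkI := Ideal.Quotient.mk (minorsIdeal (genMatrix k m κ) (t'+2)) with hmkI
  -- the key induction
  have key : ∀ (s : ℕ) (c : Fin (t'+1) → Fin κ), Function.Injective c →
      (Finset.univ.filter (fun a => n ≤ ((c a : ℕ)))).card = s →
      F (mkI (((genMatrix k m κ).submatrix (Fin.castLE h1m) c).det)) ∈ pS.map F := by
    intro s
    induction s with
    | zero =>
      intro c hc h0
      have hall : ∀ a, (c a : ℕ) < n := by
        intro a
        by_contra hge
        have hmem : a ∈ Finset.univ.filter (fun a => n ≤ ((c a : ℕ))) :=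
          Finset.mem_filter.mpr ⟨Finset.mem_univ _, not_lt.mp hge⟩
        rw [Finset.card_eq_zero] at h0
        rw [h0] at hmem
        exact absurd hmem (Finset.notMem_empty _)
      have hc0inj : Function.Injective (fun i => (⟨(c i : ℕ), hall i⟩ : Fin n)) := by
        intro i j hij
        have h' := congrArg Fin.val hij
        exact hc (Fin.ext h')
      have hmat : ((genMatrix k m κ).submatrix (Fin.castLE h1m) c) =
          (((genMatrix k m κ).submatrix
            ((Fin.castLE (by omega : t'+2-1 ≤ m)) : Fin (t'+2-1) → Fin m)
            ((Fin.castLE (by omega : n ≤ κ)) : Fin n → Fin κ)).submatrix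
            id (fun i => (⟨(c i : ℕ), hall i⟩ : Fin n))) := by
        ext i j
        simp only [Matrix.submatrix_apply]
        rfl
      rw [hmat, hpS]
      exact Ideal.mem_map_of_mem F (Ideal.mem_map_of_mem mkI
        (Ideal.subset_span ⟨id, _, Function.injective_id, hc0inj, rfl⟩))
    | succ s ih =>
      intro c hc hcard
      have hex : ∃ a, n ≤ (c a : ℕ) := by
        have hne : (Finset.univ.filter (fun a => n ≤ ((c a : ℕ)))).Nonempty := by
          rw [← Finset.card_pos, hcard]; omega
        obtain ⟨a, ha⟩ := hne
        exact ⟨a, (Finset.mem_filter.mp ha).2⟩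
      obtain ⟨a, ha⟩ := hex
      set σ : Equiv.Perm (Fin (t'+1)) := Equiv.swap a (Fin.last t') with hσ
      have hc1 : Function.Injective (c ∘ σ) := hc.comp σ.injective
      have hc1last : n ≤ ((c ∘ σ) (Fin.last t') : ℕ) := by
        simp only [Function.comp_apply, hσ, Equiv.swap_apply_right]
        exact ha
      have hcard1 : (Finset.univ.filter (fun i => n ≤ (((c ∘ σ) i : ℕ)))).card = s + 1 := by
        rw [← hcard]
        apply Finset.card_bij' (fun i _ => σ i) (fun j _ => σ.symm j)
        · intro aa haa
          simp only [Finset.mem_filter, Finset.mem_univ, true_and,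
            Function.comp_apply] at haa ⊢
          exact haa
        · intro j hj
          simp only [Finset.mem_filter, Finset.mem_univ, true_and,
            Function.comp_apply] at hj ⊢
          simpa using hj
        · intro aa _; simp
        · intro j _; simp
      have hexj : ∃ j' : Fin κ, (j' : ℕ) < n ∧ ∀ i, (c ∘ σ) i ≠ j' := by
        by_contra hcon
        push_neg at hcon
        have hsub2 : (Finset.univ.filter (fun j : Fin κ => (j : ℕ) < n))
            ⊆ Finset.univ.image (c ∘ σ) := by
          intro j hj
          simp only [Finset.mem_filter, Finset.mem_univ, true_and] at hj
          obtain ⟨i, hi⟩ := hcon j hj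
          exact Finset.mem_image.mpr ⟨i, Finset.mem_univ i, hi⟩
        have himg : Finset.univ.filter (fun j : Fin κ => (j : ℕ) < n)
            = Finset.univ.image (Fin.castLE hnκ) := by
          ext j
          constructor
          · intro hj
            rw [Finset.mem_filter] at hj
            exact Finset.mem_image.mpr ⟨⟨(j : ℕ), hj.2⟩, Finset.mem_univ _, Fin.ext rfl⟩
          · intro hj
            obtain ⟨i, -, rfl⟩ := Finset.mem_image.mp hj
            exact Finset.mem_filter.mpr ⟨Finset.mem_univ _, by simpa using i.isLt⟩
        have hcnt : (Finset.univ.filter (fun j : Fin κ => (j : ℕ) < n)).card = n := by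
          rw [himg, Finset.card_image_of_injective _ (Fin.castLE_injective _),
            Finset.card_univ, Fintype.card_fin]
        have h2 := Finset.card_le_card hsub2
        have h3 := Finset.card_image_le (f := c ∘ σ) (s := (Finset.univ : Finset (Fin (t'+1))))
        rw [hcnt] at h2
        rw [Finset.card_univ, Fintype.card_fin] at h3
        omega
      obtain ⟨j', hj'n, hj'c⟩ := hexj
      set c3 : Fin (t'+2) → Fin κ := Fin.snoc (c ∘ σ) j' with hc3
      have hc3inj : Function.Injective c3 := snoc_injective' hc1 hj'c
      set A := (genMatrix k m κ).submatrix (Fin.castLE h2m) c3 with hA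
      have hdetA : A.det ≠ 0 := by
        intro h0
        have h1 := aeval_indicator_det (k := k) (Fin.castLE h2m) c3
          (Fin.castLE_injective _) hc3inj
        rw [← hA, h0, map_zero] at h1
        exact zero_ne_one h1
      set c2 : Fin (t'+1) → Fin κ := Fin.snoc (fun i : Fin t' => (c ∘ σ) i.castSucc) j'
        with hc2
      have hc2inj : Function.Injective c2 :=
        snoc_injective' (fun i j hij => Fin.castSucc_injective _ (hc1 hij)) (fun i => hj'c _)
      have hdj := dj_identity' A hdetA ⟨t', by omega⟩ ⟨t'+1, by omega⟩ rfl rfl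
        (A.submatrix (Fin.castLE (by omega)) (Fin.castLE (by omega))) rfl
      have hrowD : (Fin.castLE h2m) ∘ (Fin.succAbove (⟨t'+1, by omega⟩ : Fin (t'+2)))
          = Fin.castLE h1m := by
        funext i
        apply Fin.ext
        simp only [Function.comp_apply, Fin.coe_castLE]
        rw [show (⟨t'+1, by omega⟩ : Fin (t'+2)) = Fin.last (t'+1) from rfl,
          Fin.succAbove_last]
        rfl
      have hcolD1 : c3 ∘ (Fin.succAbove (⟨t'+1, by omega⟩ : Fin (t'+2))) = c ∘ σ := by
        funext i
        simp only [Function.comp_apply]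
        rw [show (⟨t'+1, by omega⟩ : Fin (t'+2)) = Fin.last (t'+1) from rfl,
          Fin.succAbove_last, hc3]
        simp [Fin.snoc_castSucc]
      have hcolD2 : c3 ∘ (Fin.succAbove (⟨t', by omega⟩ : Fin (t'+2))) = c2 := by
        funext i
        simp only [Function.comp_apply]
        induction i using Fin.lastCases with
        | last =>
          rw [Fin.succAbove_of_le_castSucc _ _ (by rw [Fin.le_def]; simp),
            Fin.succ_last, hc3, Fin.snoc_last, hc2, Fin.snoc_last]
        | cast i =>
          rw [Fin.succAbove_of_castSucc_lt _ _
              (by rw [Fin.lt_def]; simpa using i.isLt),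
            hc3, Fin.snoc_castSucc, hc2, Fin.snoc_castSucc]
      have hMjjmat : A.submatrix (Fin.succAbove (⟨t', by omega⟩ : Fin (t'+2)))
            (Fin.succAbove (⟨t', by omega⟩ : Fin (t'+2)))
          = (genMatrix k m κ).submatrix
              ((Fin.castLE h2m) ∘ (Fin.succAbove (⟨t', by omega⟩ : Fin (t'+2)))) c2 := by
        rw [hA, Matrix.submatrix_submatrix, hcolD2]
      have hD1mat : A.submatrix (Fin.succAbove (⟨t'+1, by omega⟩ : Fin (t'+2)))
            (Fin.succAbove (⟨t'+1, by omega⟩ : Fin (t'+2)))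
          = (genMatrix k m κ).submatrix (Fin.castLE h1m) (c ∘ σ) := by
        rw [hA, Matrix.submatrix_submatrix, hrowD, hcolD1]
      have hD2mat : A.submatrix (Fin.succAbove (⟨t'+1, by omega⟩ : Fin (t'+2)))
            (Fin.succAbove (⟨t', by omega⟩ : Fin (t'+2)))
          = (genMatrix k m κ).submatrix (Fin.castLE h1m) c2 := by
        rw [hA, Matrix.submatrix_submatrix, hrowD, hcolD2]
      have hM2mat : A.submatrix (Fin.succAbove (⟨t', by omega⟩ : Fin (t'+2)))
            (Fin.succAbove (⟨t'+1, by omega⟩ : Fin (t'+2)))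
          = (genMatrix k m κ).submatrix
              ((Fin.castLE h2m) ∘ (Fin.succAbove (⟨t', by omega⟩ : Fin (t'+2)))) (c ∘ σ) := by
        rw [hA, Matrix.submatrix_submatrix, hcolD1]
      rw [hMjjmat, hD1mat, hD2mat, hM2mat] at hdj
      have hφ := congrArg (fun x => F (mkI x)) hdj
      simp only [_root_.map_mul, _root_.map_sub] at hφ
      have hz : F (mkI A.det) = 0 := by
        have hIn : A.det ∈ minorsIdeal (genMatrix k m κ) (t'+2) :=
          Ideal.subset_span ⟨Fin.castLE h2m, c3, Fin.castLE_injective _, hc3inj, by rw [hA]⟩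
        rw [Ideal.Quotient.eq_zero_iff_mem.mpr hIn, map_zero]
      rw [hz, mul_zero] at hφ
      have hAB := sub_eq_zero.mp hφ
      have hfil : Finset.univ.filter (fun i => n ≤ ((c2 i : ℕ)))
          = (Finset.univ.filter (fun i => n ≤ (((c ∘ σ) i : ℕ)))).erase (Fin.last t') := by
        ext i
        simp only [Finset.mem_filter, Finset.mem_univ, true_and, Finset.mem_erase]
        induction i using Fin.lastCases with
        | last =>
          rw [hc2, Fin.snoc_last]
          simp
          omega
        | cast i =>
          rw [hc2, Fin.snoc_castSucc]
          have hne : (Fin.castSucc i) ≠ Fin.last t' := Fin.ne_of_lt (Fin.castSucc_lt_last i)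
          simp only [Function.comp_apply]
          tauto
      have hcard2 : (Finset.univ.filter (fun i => n ≤ ((c2 i : ℕ)))).card = s := by
        have hlastmem : Fin.last t' ∈ Finset.univ.filter (fun i => n ≤ (((c ∘ σ) i : ℕ))) :=
          Finset.mem_filter.mpr ⟨Finset.mem_univ _, hc1last⟩
        rw [hfil, Finset.card_erase_of_mem hlastmem, hcard1]
        omega
      have hD2mem := ih c2 hc2inj hcard2
      have hnotq : mkI (((genMatrix k m κ).submatrix
          ((Fin.castLE h2m) ∘ (Fin.succAbove (⟨t', by omega⟩ : Fin (t'+2)))) c2).det) ∉ q := by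
        intro hmem
        rw [hq, hmkI, Ideal.mem_quotient_iff_mem_sup] at hmem
        set pt : Fin m × Fin κ → k := fun p =>
          if ∃ l, ((Fin.castLE h2m) ∘ (Fin.succAbove (⟨t', by omega⟩ : Fin (t'+2)))) l = p.1
              ∧ c2 l = p.2 then (1:k) else 0 with hpt
        have hker : (minorsIdeal ((genMatrix k m κ).submatrix
              ((Fin.castLE (by omega : t'+2-1 ≤ m)) : Fin (t'+2-1) → Fin m) id) (t'+2-1))
            ⊔ minorsIdeal (genMatrix k m κ) (t'+2)
            ≤ RingHom.ker (MvPolynomial.aeval pt :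
                MvPolynomial (Fin m × Fin κ) k →ₐ[k] k).toRingHom := by
          apply sup_le
          · refine Ideal.span_le.mpr ?_
            rintro d ⟨r, cq, hrq, hcq, rfl⟩
            rw [SetLike.mem_coe, RingHom.mem_ker]
            obtain ⟨l, hl⟩ := (Finite.injective_iff_surjective.mp hrq) (Fin.last t')
            rw [Matrix.submatrix_submatrix]
            apply aeval_indicator_det_zero pt _ _ l
            intro jj
            rw [hpt]
            apply if_neg
            rintro ⟨i, hi1, hi2⟩
            have hv := congrArg Fin.val hi1
            simp only [Function.comp_apply, Fin.coe_castLE, hl] at hv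
            have hcontra : (Fin.succAbove (⟨t', by omega⟩ : Fin (t'+2)) i)
                = (⟨t', by omega⟩ : Fin (t'+2)) := by
              apply Fin.ext
              rw [hv]
              rfl
            exact Fin.succAbove_ne _ i hcontra
          · refine Ideal.span_le.mpr ?_
            rintro d ⟨r, cq, hrq, hcq, rfl⟩
            rw [SetLike.mem_coe, RingHom.mem_ker]
            have hpig : ∃ l, ∀ i,
                (Fin.castLE h2m) (Fin.succAbove (⟨t', by omega⟩ : Fin (t'+2)) i) ≠ r l := by
              by_contra hcon
              push_neg at hcon
              choose g hg using hcon
              have hginj : Function.Injective g := by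
                intro l l' hll
                apply hrq
                rw [← hg l, ← hg l', hll]
              have := Fintype.card_le_of_injective g hginj
              simp only [Fintype.card_fin] at this
              omega
            obtain ⟨l, hl⟩ := hpig
            apply aeval_indicator_det_zero pt _ _ l
            intro jj
            rw [hpt]
            apply if_neg
            rintro ⟨i, hi1, hi2⟩
            exact hl i hi1
        have hk0 := hker hmem
        rw [RingHom.mem_ker] at hk0
        have hk1 := aeval_indicator_det (k := k)
          ((Fin.castLE h2m) ∘ (Fin.succAbove (⟨t', by omega⟩ : Fin (t'+2)))) c2
          ((Fin.castLE_injective _).comp (Fin.succAbove_right_injective)) hc2inj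
        rw [← hpt] at hk1
        exact zero_ne_one (hk0.symm.trans hk1)
      have hunit : IsUnit (F (mkI (((genMatrix k m κ).submatrix
          ((Fin.castLE h2m) ∘ (Fin.succAbove (⟨t', by omega⟩ : Fin (t'+2)))) c2).det))) := by
        rw [hF]
        exact IsLocalization.map_units (M := q.primeCompl) (Localization.AtPrime q) ⟨_, hnotq⟩
      obtain ⟨u, hu⟩ := hunit
      have h2 : (u : Localization.AtPrime q) *
            F (mkI (((genMatrix k m κ).submatrix (Fin.castLE h1m) (c ∘ σ)).det))
          = F (mkI (((genMatrix k m κ).submatrix (Fin.castLE h1m) c2).det)) *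
            F (mkI (((genMatrix k m κ).submatrix
              ((Fin.castLE h2m) ∘ (Fin.succAbove (⟨t', by omega⟩ : Fin (t'+2))))
              (c ∘ σ)).det)) := by
        rw [hu]; exact hAB
      have h3 : F (mkI (((genMatrix k m κ).submatrix (Fin.castLE h1m) (c ∘ σ)).det))
          = (↑u⁻¹ : Localization.AtPrime q) *
            (F (mkI (((genMatrix k m κ).submatrix (Fin.castLE h1m) c2).det)) *
             F (mkI (((genMatrix k m κ).submatrix
               ((Fin.castLE h2m) ∘ (Fin.succAbove (⟨t', by omega⟩ : Fin (t'+2))))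
               (c ∘ σ)).det))) := by
        rw [← h2, Units.inv_mul_cancel_left]
      have hmem1 : F (mkI (((genMatrix k m κ).submatrix (Fin.castLE h1m) (c ∘ σ)).det))
          ∈ pS.map F := by
        rw [h3]
        exact Ideal.mul_mem_left _ _ (Ideal.mul_mem_right _ _ hD2mem)
      have hrel : ((genMatrix k m κ).submatrix (Fin.castLE h1m) (c ∘ σ)).det
          = (Equiv.Perm.sign σ : ℤ) * ((genMatrix k m κ).submatrix (Fin.castLE h1m) c).det := by
        rw [show (genMatrix k m κ).submatrix (Fin.castLE h1m) (c ∘ σ)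
            = ((genMatrix k m κ).submatrix (Fin.castLE h1m) c).submatrix id σ from rfl,
          Matrix.det_permute']
      rcases Int.units_eq_one_or (Equiv.Perm.sign σ) with hs | hs <;> rw [hs] at hrel
      · simp only [Units.val_one, Int.cast_one, one_mul] at hrel
        rw [← hrel]
        exact hmem1
      · simp only [Units.val_neg, Units.val_one, Int.cast_neg, Int.cast_one,
          neg_one_mul] at hrel
        have hneg := neg_mem hmem1
        rw [hrel] at hneg
        simpa using hneg
  apply le_antisymm
  · -- easy inclusion
    apply Ideal.map_mono
    rw [hpS, hq]
    apply Ideal.map_mono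
    apply Ideal.span_mono
    rintro d ⟨r, c, hr, hc, rfl⟩
    refine ⟨r, Fin.castLE (by omega : n ≤ κ) ∘ c, hr,
      (Fin.castLE_injective _).comp hc, ?_⟩
    rw [Matrix.submatrix_submatrix, Matrix.submatrix_submatrix]
    rfl
  · -- hard inclusion
    have e1 : q.map F = Ideal.map F (Ideal.map mkI (minorsIdeal ((genMatrix k m κ).submatrix
        ((Fin.castLE (by omega : t'+2-1 ≤ m)) : Fin (t'+2-1) → Fin m) id) (t'+2-1))) :=
      congrArg (Ideal.map F) hq
    rw [e1, Ideal.map_map, Ideal.map_le_iff_le_comap]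
    refine Ideal.span_le.mpr ?_
    rintro d ⟨r, c, hr, hc, rfl⟩
    rw [SetLike.mem_coe, Ideal.mem_comap]
    have hbij : Function.Bijective r := Finite.injective_iff_bijective.mp hr
    have hsub : (((genMatrix k m κ).submatrix
          ((Fin.castLE (by omega : t'+2-1 ≤ m)) : Fin (t'+2-1) → Fin m) id).submatrix r c)
        = ((genMatrix k m κ).submatrix (Fin.castLE h1m) c).submatrix
            (Equiv.ofBijective r hbij) id := by
      ext i j
      simp [Matrix.submatrix_apply, Equiv.ofBijective]
    have hmem := key ((Finset.univ.filter (fun a => n ≤ ((c a : ℕ)))).card) c hc rfl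
    simp only [RingHom.coe_comp, Function.comp_apply]
    rw [hsub, Matrix.det_permute]
    rcases Int.units_eq_one_or (Equiv.Perm.sign (Equiv.ofBijective r hbij)) with hs | hs <;>
      rw [hs]
    · simpa using hmem
    · simp only [Units.val_neg, Units.val_one, Int.cast_neg, Int.cast_one, neg_one_mul,
        map_neg]
      exact neg_mem hmem
end
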